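/- arXiv:2111.04618 — 5 statements merged into one kernel-verified Lean document; each statement's English description precedes it below -/
import Mathlib

section
/- Let Ω be a bounded open strictly convex subset of Rⁿ with the Hilbert metric, x ∈ Ω, and H a horosphere centered at a smooth boundary point ξ. Then the closest point of H to x (in the Hilbert metric) is the intersection of the segment from x to ξ with H. -/
open Metric Set Filter

section Aux
variable {E : Type*} [NormedAddCommGroup E] [NormedSpace ℝ E] {Ω : Set E}

lemma memOS_iff {x b y : E} :
    y ∈ openSegment ℝ x b ↔ ∃ t : ℝ, 0 < t ∧ t < 1 ∧ y = x + t • (b - x) := by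
  rw [openSegment_eq_image']
  constructor
  · rintro ⟨t, ⟨h0, h1⟩, rfl⟩; exact ⟨t, h0, h1, rfl⟩
  · rintro ⟨t, h0, h1, rfl⟩; exact ⟨t, ⟨h0, h1⟩, rfl⟩

lemma frontier_not_mem (hΩo : IsOpen Ω) {b : E} (hb : b ∈ frontier Ω) : b ∉ Ω :=
  fun h => hb.2 (by rwa [hΩo.interior_eq])

lemma os_subset_Omega (hΩo : IsOpen Ω) (hΩc : Convex ℝ Ω) {w z : E} (hw : w ∈ Ω)
    (hz : z ∈ closure Ω) : openSegment ℝ w z ⊆ Ω := by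
  have := hΩc.openSegment_interior_closure_subset_interior (hΩo.interior_eq ▸ hw) hz
  rwa [hΩo.interior_eq] at this

lemma exists_exit (hΩo : IsOpen Ω) (hΩb : Bornology.IsBounded Ω) {x y : E}
    (hx : x ∈ Ω) (hy : y ∈ Ω) (hxy : x ≠ y) :
    ∃ b ∈ frontier Ω, y ∈ openSegment ℝ x b := by
  set v := y - x with hv
  have hv0 : v ≠ 0 := sub_ne_zero.2 (Ne.symm hxy)
  have hvn : (0:ℝ) < ‖v‖ := norm_pos_iff.2 hv0
  set S : Set ℝ := {t | x + t • v ∈ closure Ω} with hS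
  have h1S : (1:ℝ) ∈ S := by
    simp only [hS, mem_setOf_eq, one_smul, hv, add_sub_cancel]
    exact subset_closure hy
  obtain ⟨r, hr⟩ := (Metric.isBounded_iff_subset_closedBall x).1 hΩb.closure
  have hbdd : BddAbove S := by
    refine ⟨r / ‖v‖, fun t ht => ?_⟩
    have : dist (x + t • v) x ≤ r := by
      have := hr ht
      simpa [Metric.mem_closedBall] using this
    rw [dist_eq_norm, add_sub_cancel_left, norm_smul, Real.norm_eq_abs] at this
    calc t ≤ |t| := le_abs_self t
      _ ≤ r / ‖v‖ := by rw [le_div_iff₀ hvn]; exact this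
  have hScl : IsClosed S := by
    have : Continuous fun t : ℝ => x + t • v := by fun_prop
    exact IsClosed.preimage this isClosed_closure
  set T := sSup S with hT
  have hTS : T ∈ S := hScl.csSup_mem ⟨1, h1S⟩ hbdd
  have hT1 : 1 < T := by
    obtain ⟨ε, hε, hball⟩ := Metric.isOpen_iff.1 hΩo y hy
    have htS : 1 + ε / (2 * ‖v‖) ∈ S := by
      have : x + (1 + ε / (2 * ‖v‖)) • v ∈ ball y ε := by
        rw [mem_ball, dist_eq_norm]
        have : x + (1 + ε / (2 * ‖v‖)) • v - y = (ε / (2 * ‖v‖)) • v := by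
          rw [hv]; module
        rw [this, norm_smul, Real.norm_eq_abs, abs_of_pos (by positivity)]
        rw [div_mul_eq_mul_div, mul_comm]
        rw [div_lt_iff₀ (by positivity)]
        nlinarith
      exact subset_closure (hball this)
    have := le_csSup hbdd htS
    have hpos : 0 < ε / (2 * ‖v‖) := by positivity
    linarith
  have hT0 : 0 < T := by linarith
  refine ⟨x + T • v, ⟨hTS, ?_⟩, ?_⟩
  · rw [hΩo.interior_eq]
    intro hmem
    obtain ⟨ε, hε, hball⟩ := Metric.isOpen_iff.1 hΩo _ hmem
    have htS : T + ε / (2 * ‖v‖) ∈ S := by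
      have : x + (T + ε / (2 * ‖v‖)) • v ∈ ball (x + T • v) ε := by
        rw [mem_ball, dist_eq_norm]
        have : x + (T + ε / (2 * ‖v‖)) • v - (x + T • v) = (ε / (2 * ‖v‖)) • v := by
          module
        rw [this, norm_smul, Real.norm_eq_abs, abs_of_pos (by positivity)]
        rw [div_mul_eq_mul_div, mul_comm]
        rw [div_lt_iff₀ (by positivity)]
        nlinarith
      exact subset_closure (hball this)
    have := le_csSup hbdd htS
    have hpos : 0 < ε / (2 * ‖v‖) := by positivity
    linarith
  · rw [memOS_iff]
    refine ⟨T⁻¹, by positivity, inv_lt_one_of_one_lt₀ hT1, ?_⟩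
    rw [add_sub_cancel_left, smul_smul, inv_mul_cancel₀ (ne_of_gt hT0), one_smul, hv]
    abel

lemma exit_unique (hΩo : IsOpen Ω) (hΩc : Convex ℝ Ω) {x y b b' : E} (hx : x ∈ Ω)
    (hb : b ∈ frontier Ω) (hb' : b' ∈ frontier Ω)
    (h1 : y ∈ openSegment ℝ x b) (h2 : y ∈ openSegment ℝ x b') : b = b' := by
  obtain ⟨t, ht0, ht1, hy⟩ := memOS_iff.1 h1
  obtain ⟨s, hs0, hs1, hy'⟩ := memOS_iff.1 h2
  have key : t • (b - x) = s • (b' - x) := by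
    have := hy.symm.trans hy'
    linear_combination (norm := module) this
  rcases lt_trichotomy t s with h | h | h
  · exfalso
    have hmem : b' ∈ openSegment ℝ x b := by
      rw [memOS_iff]
      refine ⟨t / s, by positivity, by rw [div_lt_one hs0]; exact h, ?_⟩
      have h6 : s • (b' - x) = s • ((t / s) • (b - x)) := by
        rw [smul_smul, mul_comm, div_mul_cancel₀ _ (ne_of_gt hs0)]
        exact key.symm
      have h7 := smul_right_injective E (ne_of_gt hs0) h6
      linear_combination (norm := module) h7
    exact frontier_not_mem hΩo hb' (os_subset_Omega hΩo hΩc hx hb.1 hmem)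
  · subst h
    have h6 := smul_right_injective E (ne_of_gt ht0) key
    linear_combination (norm := module) h6
  · exfalso
    have hmem : b ∈ openSegment ℝ x b' := by
      rw [memOS_iff]
      refine ⟨s / t, by positivity, by rw [div_lt_one ht0]; exact h, ?_⟩
      have h6 : t • (b - x) = t • ((s / t) • (b' - x)) := by
        rw [smul_smul, mul_comm, div_mul_cancel₀ _ (ne_of_gt ht0)]
        exact key
      have h7 := smul_right_injective E (ne_of_gt ht0) h6
      linear_combination (norm := module) h7
    exact frontier_not_mem hΩo hb (os_subset_Omega hΩo hΩc hx hb'.1 hmem)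



/-- If `y` between `x` and `b`, and `z` between `y` and `b`, then `y` between `x` and `z`,
and `z` between `x` and `b`. -/
lemma between1 {x b y z : E} (hy : y ∈ openSegment ℝ x b) (hz : z ∈ openSegment ℝ y b) :
    y ∈ openSegment ℝ x z ∧ z ∈ openSegment ℝ x b := by
  obtain ⟨a, ha0, ha1, hya⟩ := memOS_iff.1 hy
  obtain ⟨c, hc0, hc1, hzc⟩ := memOS_iff.1 hz
  have ht3 : z = x + (a + c * (1 - a)) • (b - x) := by
    rw [hzc, hya]; module
  have h30 : 0 < a + c * (1 - a) := by nlinarith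
  have h31 : a + c * (1 - a) < 1 := by nlinarith
  constructor
  · rw [memOS_iff]
    refine ⟨a / (a + c * (1 - a)), by positivity, by rw [div_lt_one h30]; nlinarith, ?_⟩
    rw [ht3, hya]
    have : (a / (a + c * (1 - a))) • ((x + (a + c * (1 - a)) • (b - x)) - x)
        = a • (b - x) := by
      rw [add_sub_cancel_left, smul_smul, div_mul_cancel₀ _ (ne_of_gt h30)]
    rw [add_sub_cancel_left, smul_smul, div_mul_cancel₀ _ (ne_of_gt h30)]
  · rw [memOS_iff]
    exact ⟨a + c * (1 - a), h30, h31, ht3⟩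

/-- If `q` between `x` and `r`, and `r` between `q` and `b`, then `q` between `x` and `b`. -/
lemma between2 {x b q r : E} (hq : q ∈ openSegment ℝ x r) (hr : r ∈ openSegment ℝ q b) :
    q ∈ openSegment ℝ x b := by
  obtain ⟨a, ha0, ha1, hqa⟩ := memOS_iff.1 hq
  obtain ⟨c, hc0, hc1, hrc⟩ := memOS_iff.1 hr
  have hD : 0 < 1 - a + a * c := by nlinarith
  have key : (1 - a + a * c) • q = (1 - a) • x + (a * c) • b := by
    linear_combination (norm := module) hqa + a • hrc
  rw [memOS_iff]
  refine ⟨a * c / (1 - a + a * c), by positivity, by rw [div_lt_one hD]; nlinarith, ?_⟩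
  have h6 : (1 - a + a * c) • q = (1 - a + a * c) • (x + (a * c / (1 - a + a * c)) • (b - x)) := by
    rw [smul_add, smul_smul, mul_div_cancel₀ _ (ne_of_gt hD)]
    linear_combination (norm := module) key
  exact smul_right_injective E (ne_of_gt hD) h6

/-- If `y` between `x` and `z`, and `z` between `x` and `b`, then `y` between `x` and `b`
and `z` between `y` and `b`. -/
lemma between3 {x b y z : E} (hy : y ∈ openSegment ℝ x z) (hz : z ∈ openSegment ℝ x b) :
    y ∈ openSegment ℝ x b ∧ z ∈ openSegment ℝ y b := by
  obtain ⟨a, ha0, ha1, hya⟩ := memOS_iff.1 hy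
  obtain ⟨c, hc0, hc1, hzc⟩ := memOS_iff.1 hz
  have hyb : y = x + (a * c) • (b - x) := by rw [hya, hzc]; module
  have hac1 : a * c < 1 := by nlinarith
  have hD : 0 < 1 - a * c := by nlinarith
  refine ⟨memOS_iff.2 ⟨a * c, by positivity, hac1, hyb⟩, memOS_iff.2 ?_⟩
  refine ⟨c * (1 - a) / (1 - a * c), div_pos (by nlinarith) hD, by rw [div_lt_one hD]; nlinarith, ?_⟩
  have h6 : (1 - a * c) • z = (1 - a * c) • (y + (c * (1 - a) / (1 - a * c)) • (b - y)) := by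
    rw [smul_add, smul_smul, mul_div_cancel₀ _ (ne_of_gt hD)]
    rw [hyb, hzc]; module
  exact smul_right_injective E (ne_of_gt hD) h6

lemma ne_of_os {x b y : E} (hy : y ∈ openSegment ℝ x b) (hxb : x ≠ b) : y ≠ x := by
  obtain ⟨t, ht0, _, rfl⟩ := memOS_iff.1 hy
  intro h
  have : t • (b - x) = 0 := by
    have := h
    rw [add_eq_left] at this  -- x + t•(b-x) = x
    exact this
  rcases smul_eq_zero.1 this with h' | h'
  · exact absurd h' (ne_of_gt ht0)
  · exact hxb (by linear_combination (norm := module) h'.symm)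

lemma dist_ratio {x b y : E} {t : ℝ} (ht0 : 0 < t) (ht1 : t < 1)
    (hy : y = x + t • (b - x)) :
    dist y b = (1 - t) * dist x b ∧ dist x y = t * dist x b := by
  constructor
  · rw [dist_eq_norm, dist_eq_norm, hy]
    have : x + t • (b - x) - b = -((1 - t) • (b - x)) := by module
    rw [this, norm_neg, norm_smul, Real.norm_eq_abs, abs_of_pos (by linarith)]
    congr 1
    rw [norm_sub_rev]
  · rw [dist_eq_norm, dist_eq_norm, hy]
    have : x - (x + t • (b - x)) = -(t • (b - x)) := by module
    rw [this, norm_neg, norm_smul, Real.norm_eq_abs, abs_of_pos ht0]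
    congr 1
    rw [norm_sub_rev]

-- the cross ratio hypothesis shape
variable {dΩ : E → E → ℝ}
variable (hcr : ∀ x ∈ Ω, ∀ y ∈ Ω, ∀ a b : E,
      a ∈ frontier Ω → b ∈ frontier Ω → x ≠ y →
      x ∈ segment ℝ a y → y ∈ segment ℝ x b →
      dΩ x y = (1/2) * |Real.log ((dist a y * dist b x) / (dist a x * dist b y))|)

include hcr in
lemma dOm_formula (hΩo : IsOpen Ω)
    {x y a b : E} (hx : x ∈ Ω) (hy : y ∈ Ω) (ha : a ∈ frontier Ω) (hb : b ∈ frontier Ω)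
    (hax : x ∈ openSegment ℝ y a) (hyb : y ∈ openSegment ℝ x b) :
    dΩ x y = (1/2) * Real.log ((dist a y * dist b x) / (dist a x * dist b y))
      ∧ 1 < (dist a y * dist b x) / (dist a x * dist b y) := by
  have hya : y ≠ a := fun h => frontier_not_mem hΩo ha (h ▸ hy)
  have hxb : x ≠ b := fun h => frontier_not_mem hΩo hb (h ▸ hx)
  have hxy : x ≠ y := ne_of_os hax hya
  obtain ⟨s, hs0, hs1, hxs⟩ := memOS_iff.1 hax
  obtain ⟨t, ht0, ht1, hyt⟩ := memOS_iff.1 hyb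
  have hday : (0:ℝ) < dist a y := dist_pos.2 (Ne.symm hya)
  have hdbx : (0:ℝ) < dist b x := dist_pos.2 (Ne.symm hxb)
  have h1 := (dist_ratio hs0 hs1 hxs).1  -- dist x a = (1-s) * dist y a
  have h2 := (dist_ratio ht0 ht1 hyt).1  -- dist y b = (1-t) * dist x b
  have hax' : dist a x = (1 - s) * dist a y := by
    rw [dist_comm a x, dist_comm a y, h1]
  have hby' : dist b y = (1 - t) * dist b x := by
    rw [dist_comm b y, dist_comm b x, h2]
  have h1s : (0:ℝ) < 1 - s := by linarith
  have h1t : (0:ℝ) < 1 - t := by linarith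
  have hratio : (dist a y * dist b x) / (dist a x * dist b y)
      = ((1 - s) * (1 - t))⁻¹ := by
    have hprod : dist a x * dist b y
        = (dist a y * dist b x) * ((1 - s) * (1 - t)) := by
      rw [hax', hby']; ring
    rw [hprod, ← div_div, div_self (by positivity), one_div]
  have hlt : 1 < (dist a y * dist b x) / (dist a x * dist b y) := by
    rw [hratio]
    rw [one_lt_inv_iff₀]
    constructor
    · nlinarith
    · nlinarith
  refine ⟨?_, hlt⟩
  rw [hcr x hx y hy a b ha hb hxy
    (segment_symm ℝ y a ▸ openSegment_subset_segment ℝ y a hax)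
    (openSegment_subset_segment ℝ x b hyb)]
  rw [abs_of_nonneg (Real.log_nonneg hlt.le)]

include hcr in
lemma dOm_symm (hΩo : IsOpen Ω) (hΩb : Bornology.IsBounded Ω)
    (hd0 : ∀ x ∈ Ω, dΩ x x = 0) {x y : E} (hx : x ∈ Ω) (hy : y ∈ Ω) :
    dΩ x y = dΩ y x := by
  rcases eq_or_ne x y with rfl | hxy
  · rfl
  · obtain ⟨a, ha, hax⟩ := exists_exit hΩo hΩb hy hx (Ne.symm hxy)
    obtain ⟨b, hb, hyb⟩ := exists_exit hΩo hΩb hx hy hxy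
    rw [hcr x hx y hy a b ha hb hxy
      (segment_symm ℝ y a ▸ openSegment_subset_segment ℝ y a hax)
      (openSegment_subset_segment ℝ x b hyb)]
    rw [hcr y hy x hx b a hb ha (Ne.symm hxy)
      (segment_symm ℝ x b ▸ openSegment_subset_segment ℝ x b hyb)
      (openSegment_subset_segment ℝ y a hax)]
    ring_nf

include hcr in
lemma dOm_pos (hΩo : IsOpen Ω) (hΩb : Bornology.IsBounded Ω)
    {x y : E} (hx : x ∈ Ω) (hy : y ∈ Ω) (hxy : x ≠ y) : 0 < dΩ x y := by
  obtain ⟨a, ha, hax⟩ := exists_exit hΩo hΩb hy hx (Ne.symm hxy)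
  obtain ⟨b, hb, hyb⟩ := exists_exit hΩo hΩb hx hy hxy
  obtain ⟨hf, hlt⟩ := dOm_formula hcr hΩo hx hy ha hb hax hyb
  rw [hf]
  have := Real.log_pos hlt
  linarith

include hcr in
lemma dOm_nonneg (hΩo : IsOpen Ω) (hΩb : Bornology.IsBounded Ω)
    (hd0 : ∀ x ∈ Ω, dΩ x x = 0) {x y : E} (hx : x ∈ Ω) (hy : y ∈ Ω) : 0 ≤ dΩ x y := by
  rcases eq_or_ne x y with rfl | hxy
  · rw [hd0 x hx]
  · exact (dOm_pos hcr hΩo hΩb hx hy hxy).le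


lemma funk_exact {x z b1 : E} {t : ℝ} (φ : E →L[ℝ] ℝ)
    (hφx : φ x < φ b1) (ht0 : 0 < t) (ht1 : t < 1) (hz : z = x + t • (b1 - x))
    (hxb : x ≠ b1) :
    (φ b1 - φ x) / (φ b1 - φ z) = dist x b1 / dist z b1 := by
  have hφz : φ z = φ x + t * (φ b1 - φ x) := by
    rw [hz]; simp [map_add, map_smul, map_sub, smul_eq_mul]
  have hd := (dist_ratio ht0 ht1 hz).1
  have hD : (0:ℝ) < dist x b1 := dist_pos.2 hxb
  have hsx : (0:ℝ) < φ b1 - φ x := by linarith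
  rw [hd, hφz]
  rw [show φ b1 - (φ x + t * (φ b1 - φ x)) = (φ b1 - φ x) * (1 - t) by ring,
    show (1 - t) * dist x b1 = dist x b1 * (1 - t) by ring,
    ← div_div, div_self (ne_of_gt hsx), ← div_div, div_self (ne_of_gt hD)]

lemma funk_le {x y b2 : E} {u : ℝ} (φ : E →L[ℝ] ℝ) {s : ℝ}
    (hφx : φ x < s) (hφy : φ y < s) (hφb : φ b2 ≤ s)
    (hu0 : 0 < u) (hu1 : u < 1) (hy : y = x + u • (b2 - x)) (hxb : x ≠ b2) :
    (s - φ x) / (s - φ y) ≤ dist x b2 / dist y b2 ∧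
      ((s - φ x) / (s - φ y) = dist x b2 / dist y b2 → φ b2 = s) := by
  have hφy' : φ y = φ x + u * (φ b2 - φ x) := by
    rw [hy]; simp [map_add, map_smul, map_sub, smul_eq_mul]
  have hd := (dist_ratio hu0 hu1 hy).1
  have hD : (0:ℝ) < dist x b2 := dist_pos.2 hxb
  have hsx : (0:ℝ) < s - φ x := by linarith
  have hsy : (0:ℝ) < s - φ y := by linarith
  have h1u : (0:ℝ) < 1 - u := by linarith
  have hR : dist x b2 / dist y b2 = 1 / (1 - u) := by
    rw [hd, show (1 - u) * dist x b2 = dist x b2 * (1 - u) by ring, ← div_div,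
      div_self (ne_of_gt hD)]
  constructor
  · rw [hR, div_le_div_iff₀ hsy h1u]
    nlinarith [mul_nonneg hu0.le (sub_nonneg.2 hφb)]
  · intro heq
    rw [hR] at heq
    rw [div_eq_div_iff (ne_of_gt hsy) (ne_of_gt h1u)] at heq
    have h0 : u * (s - φ b2) = 0 := by nlinarith
    rcases mul_eq_zero.1 h0 with h' | h'
    · exact absurd h' (ne_of_gt hu0)
    · linarith

lemma support_unique (hΩo : IsOpen Ω) (hΩc : Convex ℝ Ω)
    (hstrict : ∀ a ∈ frontier Ω, ∀ b ∈ frontier Ω,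
      openSegment ℝ a b ⊆ frontier Ω → a = b)
    (φ : E →L[ℝ] ℝ) {s : ℝ} (hφ : ∀ w ∈ Ω, φ w < s) {u v : E}
    (hu : u ∈ frontier Ω) (hv : v ∈ frontier Ω) (hus : φ u = s) (hvs : φ v = s) :
    u = v := by
  apply hstrict u hu v hv
  intro w hw
  have hwcl : w ∈ closure Ω := (hΩc.closure.segment_subset hu.1 hv.1)
    (openSegment_subset_segment ℝ u v hw)
  obtain ⟨α, β, hα, hβ, hαβ, hwc⟩ := hw
  have hφw : φ w = s := by
    rw [← hwc]
    simp [map_add, map_smul, smul_eq_mul, hus, hvs]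
    calc α * s + β * s = (α + β) * s := by ring
      _ = s := by rw [hαβ, one_mul]
  refine ⟨hwcl, ?_⟩
  rw [hΩo.interior_eq]
  intro hwin
  exact absurd hφw (ne_of_lt (hφ w hwin))

-- closure bound for supporting functional
lemma support_closure {φ : E →L[ℝ] ℝ} {s : ℝ} (hφ : ∀ w ∈ Ω, φ w < s) :
    ∀ w ∈ closure Ω, φ w ≤ s := fun w hw =>
  (closure_minimal (fun z hz => (hφ z hz).le)
    (IsClosed.preimage φ.continuous isClosed_Iic)) hw

lemma funk_chain (hΩo : IsOpen Ω) {x y z b1 b2 b3 : E}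
    (hx : x ∈ Ω) (hy : y ∈ Ω) (hz : z ∈ Ω)
    (hb1 : b1 ∈ frontier Ω) (hb2 : b2 ∈ frontier Ω) (hb3 : b3 ∈ frontier Ω)
    (hzb1 : z ∈ openSegment ℝ x b1) (hyb2 : y ∈ openSegment ℝ x b2)
    (hzb3 : z ∈ openSegment ℝ y b3)
    (φ : E →L[ℝ] ℝ) (hφ : ∀ w ∈ Ω, φ w < φ b1) :
    dist x b1 / dist z b1 ≤ (dist x b2 / dist y b2) * (dist y b3 / dist z b3) ∧
      (dist x b1 / dist z b1 = (dist x b2 / dist y b2) * (dist y b3 / dist z b3) →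
        φ b2 = φ b1 ∧ φ b3 = φ b1) := by
  have hxb1 : x ≠ b1 := fun h => frontier_not_mem hΩo hb1 (h ▸ hx)
  have hxb2 : x ≠ b2 := fun h => frontier_not_mem hΩo hb2 (h ▸ hx)
  have hyb3 : y ≠ b3 := fun h => frontier_not_mem hΩo hb3 (h ▸ hy)
  obtain ⟨t1, ht10, ht11, hzt1⟩ := memOS_iff.1 hzb1
  obtain ⟨t2, ht20, ht21, hyt2⟩ := memOS_iff.1 hyb2
  obtain ⟨t3, ht30, ht31, hzt3⟩ := memOS_iff.1 hzb3
  set s := φ b1 with hs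
  have hcl := support_closure hφ
  have e1 : dist x b1 / dist z b1 = (s - φ x) / (s - φ z) :=
    (funk_exact φ (hφ x hx) ht10 ht11 hzt1 hxb1).symm
  have le2p := funk_le φ (hφ x hx) (hφ y hy) (hcl b2 hb2.1) ht20 ht21 hyt2 hxb2
  have le3p := funk_le φ (hφ y hy) (hφ z hz) (hcl b3 hb3.1) ht30 ht31 hzt3 hyb3
  have hsx : (0:ℝ) < s - φ x := by have := hφ x hx; simp only [hs]; linarith
  have hsy : (0:ℝ) < s - φ y := by have := hφ y hy; simp only [hs]; linarith
  have hsz : (0:ℝ) < s - φ z := by have := hφ z hz; simp only [hs]; linarith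
  have hP2 : (0:ℝ) < (s - φ x) / (s - φ y) := div_pos hsx hsy
  have hP3 : (0:ℝ) < (s - φ y) / (s - φ z) := div_pos hsy hsz
  have hsplit : (s - φ x) / (s - φ z) = ((s - φ x) / (s - φ y)) * ((s - φ y) / (s - φ z)) := by
    field_simp
  have hineq : dist x b1 / dist z b1 ≤ (dist x b2 / dist y b2) * (dist y b3 / dist z b3) := by
    rw [e1, hsplit]
    exact mul_le_mul le2p.1 le3p.1 hP3.le (hP2.trans_le le2p.1).le
  refine ⟨hineq, fun heq => ?_⟩
  have hprod : ((s - φ x) / (s - φ y)) * ((s - φ y) / (s - φ z))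
      = (dist x b2 / dist y b2) * (dist y b3 / dist z b3) := by
    rw [← hsplit, ← e1, heq]
  have hq2 : (s - φ x) / (s - φ y) = dist x b2 / dist y b2 := by
    refine le_antisymm le2p.1 ?_
    nlinarith [le2p.1, le3p.1, hP2, hP3,
      mul_le_mul_of_nonneg_left le3p.1 (hP2.trans_le le2p.1).le]
  have hq3 : (s - φ y) / (s - φ z) = dist y b3 / dist z b3 := by
    refine le_antisymm le3p.1 ?_
    nlinarith [le2p.1, le3p.1, hP2, hP3,
      mul_le_mul_of_nonneg_right le2p.1 hP3.le]
  exact ⟨le2p.2 hq2, le3p.2 hq3⟩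

include hcr in
lemma dOm_triangle (hΩo : IsOpen Ω) (hΩb : Bornology.IsBounded Ω) (hΩc : Convex ℝ Ω)
    (hd0 : ∀ x ∈ Ω, dΩ x x = 0) {x y z : E} (hx : x ∈ Ω) (hy : y ∈ Ω) (hz : z ∈ Ω) :
    dΩ x z ≤ dΩ x y + dΩ y z := by
  rcases eq_or_ne x y with rfl | hxy
  · rw [hd0 x hx]; linarith
  rcases eq_or_ne y z with rfl | hyz
  · rw [hd0 y hy]; linarith
  rcases eq_or_ne x z with rfl | hxz
  · rw [hd0 x hx]
    have h1 := dOm_nonneg hcr hΩo hΩb hd0 hx hy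
    have h2 := dOm_nonneg hcr hΩo hΩb hd0 hy hx
    linarith
  obtain ⟨b1, hb1, hzb1⟩ := exists_exit hΩo hΩb hx hz hxz
  obtain ⟨a1, ha1, hxa1⟩ := exists_exit hΩo hΩb hz hx hxz.symm
  obtain ⟨b2, hb2, hyb2⟩ := exists_exit hΩo hΩb hx hy hxy
  obtain ⟨a2, ha2, hxa2⟩ := exists_exit hΩo hΩb hy hx hxy.symm
  obtain ⟨b3, hb3, hzb3⟩ := exists_exit hΩo hΩb hy hz hyz
  obtain ⟨a3, ha3, hya3⟩ := exists_exit hΩo hΩb hz hy hyz.symm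
  obtain ⟨f1, hlt1⟩ := dOm_formula hcr hΩo hx hz ha1 hb1 hxa1 hzb1
  obtain ⟨f2, hlt2⟩ := dOm_formula hcr hΩo hx hy ha2 hb2 hxa2 hyb2
  obtain ⟨f3, hlt3⟩ := dOm_formula hcr hΩo hy hz ha3 hb3 hya3 hzb3
  obtain ⟨φ, hφ⟩ := geometric_hahn_banach_open_point hΩc hΩo (frontier_not_mem hΩo hb1)
  obtain ⟨ψ, hψ⟩ := geometric_hahn_banach_open_point hΩc hΩo (frontier_not_mem hΩo ha1)
  have chainF := (funk_chain hΩo hx hy hz hb1 hb2 hb3 hzb1 hyb2 hzb3 φ hφ).1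
  have hxa1' : x ∈ openSegment ℝ z a1 := hxa1
  have hya3' : y ∈ openSegment ℝ z a3 := hya3
  have chainB := (funk_chain hΩo hz hy hx ha1 ha3 ha2 hxa1 hya3 hxa2 ψ hψ).1
  -- positivity of all distances
  have hpos : ∀ (u : E), u ∈ Ω → ∀ (w : E), w ∈ frontier Ω → (0:ℝ) < dist u w :=
    fun u hu w hw => dist_pos.2 (fun h => frontier_not_mem hΩo hw (h ▸ hu))
  have p1 := hpos x hx b1 hb1; have p2 := hpos z hz b1 hb1
  have p3 := hpos x hx b2 hb2; have p4 := hpos y hy b2 hb2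
  have p5 := hpos y hy b3 hb3; have p6 := hpos z hz b3 hb3
  have q1 := hpos z hz a1 ha1; have q2 := hpos x hx a1 ha1
  have q3 := hpos z hz a3 ha3; have q4 := hpos y hy a3 ha3
  have q5 := hpos y hy a2 ha2; have q6 := hpos x hx a2 ha2
  -- ratios rearrangement
  have hR1 : (dist a1 z * dist b1 x) / (dist a1 x * dist b1 z)
      = (dist x b1 / dist z b1) * (dist z a1 / dist x a1) := by
    rw [dist_comm a1 z, dist_comm b1 x, dist_comm a1 x, dist_comm b1 z]; ring
  have hR2 : (dist a2 y * dist b2 x) / (dist a2 x * dist b2 y)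
      = (dist x b2 / dist y b2) * (dist y a2 / dist x a2) := by
    rw [dist_comm a2 y, dist_comm b2 x, dist_comm a2 x, dist_comm b2 y]; ring
  have hR3 : (dist a3 z * dist b3 y) / (dist a3 y * dist b3 z)
      = (dist y b3 / dist z b3) * (dist z a3 / dist y a3) := by
    rw [dist_comm a3 z, dist_comm b3 y, dist_comm a3 y, dist_comm b3 z]; ring
  rw [f1, f2, f3, hR1, hR2, hR3]
  have hkey : (dist x b1 / dist z b1) * (dist z a1 / dist x a1)
      ≤ ((dist x b2 / dist y b2) * (dist y a2 / dist x a2))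
        * ((dist y b3 / dist z b3) * (dist z a3 / dist y a3)) := by
    have h := mul_le_mul chainF chainB (div_pos q1 q2).le
      (by positivity)
    calc (dist x b1 / dist z b1) * (dist z a1 / dist x a1)
        ≤ ((dist x b2 / dist y b2) * (dist y b3 / dist z b3))
          * ((dist z a3 / dist y a3) * (dist y a2 / dist x a2)) := h
      _ = ((dist x b2 / dist y b2) * (dist y a2 / dist x a2))
        * ((dist y b3 / dist z b3) * (dist z a3 / dist y a3)) := by ring
  have hp1 : (0:ℝ) < (dist x b1 / dist z b1) * (dist z a1 / dist x a1) := by positivity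
  have hp2 : (0:ℝ) < (dist x b2 / dist y b2) * (dist y a2 / dist x a2) := by positivity
  have hp3 : (0:ℝ) < (dist y b3 / dist z b3) * (dist z a3 / dist y a3) := by positivity
  have hlog := Real.log_le_log hp1 hkey
  rw [Real.log_mul (ne_of_gt hp2) (ne_of_gt hp3)] at hlog
  linarith

include hcr in
lemma dOm_add (hΩo : IsOpen Ω) (hΩb : Bornology.IsBounded Ω) (hΩc : Convex ℝ Ω)
    {x y z : E} (hx : x ∈ Ω) (hz : z ∈ Ω) (hxz : x ≠ z)
    (hy : y ∈ openSegment ℝ x z) : dΩ x z = dΩ x y + dΩ y z := by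
  have hyΩ : y ∈ Ω := hΩc.segment_subset hx hz (openSegment_subset_segment _ _ _ hy)
  obtain ⟨b, hb, hzb⟩ := exists_exit hΩo hΩb hx hz hxz
  obtain ⟨a, ha, hxa⟩ := exists_exit hΩo hΩb hz hx hxz.symm
  obtain ⟨hyb', hzyb⟩ := between3 hy hzb
  have hy' : y ∈ openSegment ℝ z x := by rwa [openSegment_symm]
  obtain ⟨hya', hxya⟩ := between3 hy' hxa
  obtain ⟨f1, _⟩ := dOm_formula hcr hΩo hx hz ha hb hxa hzb
  obtain ⟨f2, _⟩ := dOm_formula hcr hΩo hx hyΩ ha hb hxya hyb'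
  obtain ⟨f3, _⟩ := dOm_formula hcr hΩo hyΩ hz ha hb hya' hzyb
  rw [f1, f2, f3]
  have hpos : ∀ (u : E), u ∈ Ω → ∀ (w : E), w ∈ frontier Ω → (0:ℝ) < dist w u :=
    fun u hu w hw => dist_pos.2 (fun h => frontier_not_mem hΩo hw (h.symm ▸ hu))
  have p1 := hpos x hx a ha; have p2 := hpos y hyΩ a ha; have p3 := hpos z hz a ha
  have p4 := hpos x hx b hb; have p5 := hpos y hyΩ b hb; have p6 := hpos z hz b hb
  have hsplit : (dist a z * dist b x) / (dist a x * dist b z)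
      = ((dist a y * dist b x) / (dist a x * dist b y))
        * ((dist a z * dist b y) / (dist a y * dist b z)) := by
    field_simp
  rw [hsplit, Real.log_mul (by positivity) (by positivity)]
  ring

include hcr in
lemma dOm_between (hΩo : IsOpen Ω) (hΩb : Bornology.IsBounded Ω) (hΩc : Convex ℝ Ω)
    (hstrict : ∀ a ∈ frontier Ω, ∀ b ∈ frontier Ω,
      openSegment ℝ a b ⊆ frontier Ω → a = b)
    {x y z : E} (hx : x ∈ Ω) (hy : y ∈ Ω) (hz : z ∈ Ω)
    (hxy : x ≠ y) (hyz : y ≠ z) (hxz : x ≠ z)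
    (heq : dΩ x z = dΩ x y + dΩ y z) : y ∈ openSegment ℝ x z := by
  obtain ⟨b1, hb1, hzb1⟩ := exists_exit hΩo hΩb hx hz hxz
  obtain ⟨a1, ha1, hxa1⟩ := exists_exit hΩo hΩb hz hx hxz.symm
  obtain ⟨b2, hb2, hyb2⟩ := exists_exit hΩo hΩb hx hy hxy
  obtain ⟨a2, ha2, hxa2⟩ := exists_exit hΩo hΩb hy hx hxy.symm
  obtain ⟨b3, hb3, hzb3⟩ := exists_exit hΩo hΩb hy hz hyz
  obtain ⟨a3, ha3, hya3⟩ := exists_exit hΩo hΩb hz hy hyz.symm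
  obtain ⟨f1, _⟩ := dOm_formula hcr hΩo hx hz ha1 hb1 hxa1 hzb1
  obtain ⟨f2, _⟩ := dOm_formula hcr hΩo hx hy ha2 hb2 hxa2 hyb2
  obtain ⟨f3, _⟩ := dOm_formula hcr hΩo hy hz ha3 hb3 hya3 hzb3
  obtain ⟨φ, hφ⟩ := geometric_hahn_banach_open_point hΩc hΩo (frontier_not_mem hΩo hb1)
  obtain ⟨ψ, hψ⟩ := geometric_hahn_banach_open_point hΩc hΩo (frontier_not_mem hΩo ha1)
  have chainF := funk_chain hΩo hx hy hz hb1 hb2 hb3 hzb1 hyb2 hzb3 φ hφ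
  have chainB := funk_chain hΩo hz hy hx ha1 ha3 ha2 hxa1 hya3 hxa2 ψ hψ
  have hpos : ∀ (u : E), u ∈ Ω → ∀ (w : E), w ∈ frontier Ω → (0:ℝ) < dist u w :=
    fun u hu w hw => dist_pos.2 (fun h => frontier_not_mem hΩo hw (h ▸ hu))
  have p1 := hpos x hx b1 hb1; have p2 := hpos z hz b1 hb1
  have p3 := hpos x hx b2 hb2; have p4 := hpos y hy b2 hb2
  have p5 := hpos y hy b3 hb3; have p6 := hpos z hz b3 hb3
  have q1 := hpos z hz a1 ha1; have q2 := hpos x hx a1 ha1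
  have q3 := hpos z hz a3 ha3; have q4 := hpos y hy a3 ha3
  have q5 := hpos y hy a2 ha2; have q6 := hpos x hx a2 ha2
  have hR1 : (dist a1 z * dist b1 x) / (dist a1 x * dist b1 z)
      = (dist x b1 / dist z b1) * (dist z a1 / dist x a1) := by
    rw [dist_comm a1 z, dist_comm b1 x, dist_comm a1 x, dist_comm b1 z]; ring
  have hR2 : (dist a2 y * dist b2 x) / (dist a2 x * dist b2 y)
      = (dist x b2 / dist y b2) * (dist y a2 / dist x a2) := by
    rw [dist_comm a2 y, dist_comm b2 x, dist_comm a2 x, dist_comm b2 y]; ring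
  have hR3 : (dist a3 z * dist b3 y) / (dist a3 y * dist b3 z)
      = (dist y b3 / dist z b3) * (dist z a3 / dist y a3) := by
    rw [dist_comm a3 z, dist_comm b3 y, dist_comm a3 y, dist_comm b3 z]; ring
  rw [f1, f2, f3, hR1, hR2, hR3] at heq
  set F1 := dist x b1 / dist z b1 with hF1
  set F2 := dist x b2 / dist y b2 with hF2
  set F3 := dist y b3 / dist z b3 with hF3
  set B1 := dist z a1 / dist x a1 with hB1
  set B2 := dist y a2 / dist x a2 with hB2
  set B3 := dist z a3 / dist y a3 with hB3
  have hF1p : (0:ℝ) < F1 := by rw [hF1]; positivity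
  have hF2p : (0:ℝ) < F2 := by rw [hF2]; positivity
  have hF3p : (0:ℝ) < F3 := by rw [hF3]; positivity
  have hB1p : (0:ℝ) < B1 := by rw [hB1]; positivity
  have hB2p : (0:ℝ) < B2 := by rw [hB2]; positivity
  have hB3p : (0:ℝ) < B3 := by rw [hB3]; positivity
  -- from heq : (1/2) log (F1*B1) = (1/2) log (F2*B2) + (1/2) log (F3*B3)
  have hlogeq : Real.log (F1 * B1) = Real.log ((F2 * B2) * (F3 * B3)) := by
    have e2 : Real.log ((F2 * B2) * (F3 * B3))
        = Real.log F2 + Real.log B2 + (Real.log F3 + Real.log B3) := by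
      rw [Real.log_mul (by positivity) (by positivity),
        Real.log_mul (ne_of_gt hF2p) (ne_of_gt hB2p),
        Real.log_mul (ne_of_gt hF3p) (ne_of_gt hB3p)]
    rw [Real.log_mul (ne_of_gt hF1p) (ne_of_gt hB1p), e2]
    rw [Real.log_mul (ne_of_gt hF1p) (ne_of_gt hB1p),
      Real.log_mul (ne_of_gt hF2p) (ne_of_gt hB2p),
      Real.log_mul (ne_of_gt hF3p) (ne_of_gt hB3p)] at heq
    linarith
  have hprodeq : F1 * B1 = (F2 * B2) * (F3 * B3) := by
    have h1 : Real.exp (Real.log (F1 * B1)) = F1 * B1 := Real.exp_log (by positivity)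
    have h2 : Real.exp (Real.log ((F2 * B2) * (F3 * B3))) = (F2 * B2) * (F3 * B3) :=
      Real.exp_log (by positivity)
    rw [← h1, ← h2, hlogeq]
  -- chainF.1 : F1 ≤ F2 * F3 ; chainB.1 : B1 ≤ B3 * B2
  have hFeq : F1 = F2 * F3 := by
    refine le_antisymm chainF.1 ?_
    nlinarith [chainF.1, chainB.1, hF1p, hB1p, hF2p, hF3p, hB2p, hB3p,
      mul_le_mul_of_nonneg_left chainB.1 (mul_pos hF2p hF3p).le]
  obtain ⟨hφ2, hφ3⟩ := chainF.2 hFeq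
  have hb2b1 : b2 = b1 := support_unique hΩo hΩc hstrict φ hφ hb2 hb1 hφ2 rfl
  have hb3b1 : b3 = b1 := support_unique hΩo hΩc hstrict φ hφ hb3 hb1 hφ3 rfl
  subst hb2b1
  subst hb3b1
  exact (between1 hyb2 hzb3).1

end Aux

/-- Let `Ω ⊆ ℝⁿ` be a bounded open strictly convex set with the Hilbert
metric, `x ∈ Ω`, and `H` a horosphere centered at a smooth boundary point `ξ`
(a level set of the Busemann function `β_ξ(o,·)`). Then the closest point of `H` to
`x` is the intersection of the segment from `x` to `ξ` with `H`. -/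
theorem hilbert_proj_horosphere
    {n : ℕ} (Ω : Set (EuclideanSpace ℝ (Fin n)))
    (hΩo : IsOpen Ω) (hΩb : Bornology.IsBounded Ω) (hΩc : Convex ℝ Ω)
    (hstrict : ∀ a ∈ frontier Ω, ∀ b ∈ frontier Ω,
      openSegment ℝ a b ⊆ frontier Ω → a = b)
    (dΩ : EuclideanSpace ℝ (Fin n) → EuclideanSpace ℝ (Fin n) → ℝ)
    (hcr : ∀ x ∈ Ω, ∀ y ∈ Ω, ∀ a b : EuclideanSpace ℝ (Fin n),
      a ∈ frontier Ω → b ∈ frontier Ω → x ≠ y →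
      x ∈ segment ℝ a y → y ∈ segment ℝ x b →
      dΩ x y = (1/2) * |Real.log ((dist a y * dist b x) / (dist a x * dist b y))|)
    (hd0 : ∀ x ∈ Ω, dΩ x x = 0)
    (ξ : EuclideanSpace ℝ (Fin n)) (hξ : ξ ∈ frontier Ω)
    (hsmooth : ∃! Hpl : Set (EuclideanSpace ℝ (Fin n)),
      ∃ f : EuclideanSpace ℝ (Fin n) →L[ℝ] ℝ, f ≠ 0 ∧
        Hpl = {z | f z = f ξ} ∧ ∀ z ∈ Ω, f z < f ξ)
    (β : EuclideanSpace ℝ (Fin n) → EuclideanSpace ℝ (Fin n) → ℝ)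
    (hβ : ∀ x ∈ Ω, ∀ q ∈ Ω,
      Filter.Tendsto (fun z => dΩ x z - dΩ q z) (nhdsWithin ξ Ω) (nhds (β x q)))
    -- the horosphere `H` centered at `ξ`: a level set of `β_ξ(o,·)`
    (o : EuclideanSpace ℝ (Fin n)) (ho : o ∈ Ω) (c : ℝ)
    (H : Set (EuclideanSpace ℝ (Fin n))) (hH : H = {q | q ∈ Ω ∧ β o q = c})
    (x : EuclideanSpace ℝ (Fin n)) (hx : x ∈ Ω)
    (p : EuclideanSpace ℝ (Fin n)) (hpH : p ∈ H) (hpseg : p ∈ openSegment ℝ x ξ) :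
    (∀ q ∈ H, dΩ x p ≤ dΩ x q) ∧
      (∀ q ∈ H, (∀ q' ∈ H, dΩ x q ≤ dΩ x q') → q = p) := by
  subst hH
  obtain ⟨hpΩ, hβp⟩ := hpH
  have hξcl : ξ ∈ closure Ω := frontier_subset_closure hξ
  haveI hNB : (nhdsWithin ξ Ω).NeBot := mem_closure_iff_nhdsWithin_neBot.1 hξcl
  have hξΩ : ξ ∉ Ω := frontier_not_mem hΩo hξ
  have hxξ : x ≠ ξ := fun h => hξΩ (h ▸ hx)
  have hxp : x ≠ p := (ne_of_os hpseg hxξ).symm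
  -- cocycle property of β
  have hcoc : ∀ u ∈ Ω, ∀ v ∈ Ω, ∀ w ∈ Ω, β u w = β u v + β v w := by
    intro u hu v hv w hw
    have h1 : Filter.Tendsto (fun z => (dΩ u z - dΩ v z) + (dΩ v z - dΩ w z))
        (nhdsWithin ξ Ω) (nhds (β u v + β v w)) := (hβ u hu v hv).add (hβ v hv w hw)
    have h2 : (fun z => (dΩ u z - dΩ v z) + (dΩ v z - dΩ w z))
        = fun z => dΩ u z - dΩ w z := by funext z; ring
    rw [h2] at h1
    exact tendsto_nhds_unique (hβ u hu w hw) h1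
  -- β along a segment toward ξ equals the distance
  have hβseg : ∀ w ∈ Ω, ∀ m, m ∈ openSegment ℝ w ξ → β w m = dΩ w m := by
    intro w hw m hm
    have hwξ : w ≠ ξ := fun h => hξΩ (h ▸ hw)
    have hmΩ : m ∈ Ω := os_subset_Omega hΩo hΩc hw hξcl hm
    have hmw : m ≠ w := ne_of_os hm hwξ
    set S := openSegment ℝ m ξ with hS
    have hSΩ : S ⊆ Ω := os_subset_Omega hΩo hΩc hmΩ hξcl
    have hξS : ξ ∈ closure S := by
      rw [hS, closure_openSegment]
      exact right_mem_segment ℝ m ξ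
    haveI : (nhdsWithin ξ S).NeBot := mem_closure_iff_nhdsWithin_neBot.1 hξS
    have h1 : Filter.Tendsto (fun z => dΩ w z - dΩ m z) (nhdsWithin ξ S)
        (nhds (β w m)) := (hβ w hw m hmΩ).mono_left (nhdsWithin_mono ξ hSΩ)
    have h2 : Filter.Tendsto (fun z => dΩ w z - dΩ m z) (nhdsWithin ξ S)
        (nhds (dΩ w m)) := by
      apply tendsto_nhdsWithin_congr (f := fun _ => dΩ w m)
      · intro z hzS
        have hzΩ : z ∈ Ω := hSΩ hzS
        have hmem : m ∈ openSegment ℝ w z := (between1 hm hzS).1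
        have hwz : w ≠ z := by
          intro h
          rw [← h, openSegment_same] at hmem
          exact hmw hmem
        have := dOm_add hcr hΩo hΩb hΩc hw hzΩ hwz hmem
        linarith
      · exact tendsto_const_nhds
    exact tendsto_nhds_unique h1 h2
  -- Busemann function is bounded by distance
  have hβle : ∀ u ∈ Ω, ∀ v ∈ Ω, β u v ≤ dΩ u v := by
    intro u hu v hv
    apply le_of_tendsto (hβ u hu v hv)
    apply eventually_nhdsWithin_of_forall
    intro z hzΩ
    have := dOm_triangle hcr hΩo hΩb hΩc hd0 hu hv hzΩ
    linarith
  have hβxp : β x p = dΩ x p := hβseg x hx p hpseg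
  have part1 : ∀ q ∈ {q | q ∈ Ω ∧ β o q = c}, dΩ x p ≤ dΩ x q := by
    rintro q ⟨hqΩ, hβq⟩
    have e1 : β x p = β x o + β o p := hcoc x hx o ho p hpΩ
    have e2 : β x q = β x o + β o q := hcoc x hx o ho q hqΩ
    have e3 : β x p = β x q := by rw [e1, e2, hβp, hβq]
    calc dΩ x p = β x p := hβxp.symm
      _ = β x q := e3
      _ ≤ dΩ x q := hβle x hx q hqΩ
  refine ⟨part1, ?_⟩
  rintro q ⟨hqΩ, hβq⟩ hmin
  by_cases hqpe : q = p
  · exact hqpe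
  exfalso
  have hqp : dΩ x q = dΩ x p :=
    le_antisymm (hmin p ⟨hpΩ, hβp⟩) (part1 q ⟨hqΩ, hβq⟩)
  have hβxq : β x q = dΩ x q := by
    have e1 : β x p = β x o + β o p := hcoc x hx o ho p hpΩ
    have e2 : β x q = β x o + β o q := hcoc x hx o ho q hqΩ
    have e3 : β x p = β x q := by rw [e1, e2, hβp, hβq]
    rw [← e3, hβxp, hqp]
  have hqx : q ≠ x := by
    intro h
    rw [h, hd0 x hx] at hqp
    have := dOm_pos hcr hΩo hΩb hx hpΩ hxp
    linarith
  have hqξ : q ≠ ξ := fun h => hξΩ (h ▸ hqΩ)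
  set r := q + (1/2 : ℝ) • (ξ - q) with hr
  have hrseg : r ∈ openSegment ℝ q ξ :=
    memOS_iff.2 ⟨1/2, by norm_num, by norm_num, hr⟩
  have hrΩ : r ∈ Ω := os_subset_Omega hΩo hΩc hqΩ hξcl hrseg
  have hβqr : β q r = dΩ q r := hβseg q hqΩ r hrseg
  have hqr : q ≠ r := (ne_of_os hrseg hqξ).symm
  have hsum : dΩ x r = dΩ x q + dΩ q r := by
    have e3 : β x r = β x q + β q r := hcoc x hx q hqΩ r hrΩ
    have h4 : β x r ≤ dΩ x r := hβle x hx r hrΩ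
    have h5 : dΩ x r ≤ dΩ x q + dΩ q r := dOm_triangle hcr hΩo hΩb hΩc hd0 hx hqΩ hrΩ
    rw [hβxq, hβqr] at e3
    linarith
  have hrx : x ≠ r := by
    intro h
    have g1 := dOm_pos hcr hΩo hΩb hx hqΩ hqx.symm
    have g2 := dOm_pos hcr hΩo hΩb hqΩ hrΩ hqr
    rw [← h] at g2
    rw [← h, hd0 x hx] at hsum
    linarith
  have hbetween : q ∈ openSegment ℝ x r :=
    dOm_between hcr hΩo hΩb hΩc hstrict hx hqΩ hrΩ hqx.symm hqr hrx hsum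
  have hqseg : q ∈ openSegment ℝ x ξ := between2 hbetween hrseg
  obtain ⟨tp, htp0, htp1, hpe⟩ := memOS_iff.1 hpseg
  obtain ⟨tq, htq0, htq1, hqe⟩ := memOS_iff.1 hqseg
  rcases lt_trichotomy tp tq with hlt | heqt | hgt
  · have h1tp : (0:ℝ) < 1 - tp := by linarith
    have hqps : q ∈ openSegment ℝ p ξ := by
      rw [memOS_iff]
      refine ⟨(tq - tp)/(1 - tp), div_pos (by linarith) h1tp, by rw [div_lt_one h1tp]; linarith, ?_⟩
      have h6 : (1 - tp) • q = (1 - tp) • (p + ((tq - tp)/(1 - tp)) • (ξ - p)) := by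
        rw [smul_add, smul_smul, mul_div_cancel₀ _ (ne_of_gt h1tp)]
        rw [hpe, hqe]; module
      exact smul_right_injective _ (ne_of_gt h1tp) h6
    have e4 : β o q = β o p + β p q := hcoc o ho p hpΩ q hqΩ
    have hβpq : β p q = dΩ p q := hβseg p hpΩ q hqps
    have hdpq : 0 < dΩ p q :=
      dOm_pos hcr hΩo hΩb hpΩ hqΩ (fun h => hqpe (h.symm))
    rw [hβq, hβp, hβpq] at e4
    linarith
  · apply hqpe
    rw [hqe, ← heqt, ← hpe]
  · have h1tq : (0:ℝ) < 1 - tq := by linarith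
    have hpqs : p ∈ openSegment ℝ q ξ := by
      rw [memOS_iff]
      refine ⟨(tp - tq)/(1 - tq), div_pos (by linarith) h1tq, by rw [div_lt_one h1tq]; linarith, ?_⟩
      have h6 : (1 - tq) • p = (1 - tq) • (q + ((tp - tq)/(1 - tq)) • (ξ - q)) := by
        rw [smul_add, smul_smul, mul_div_cancel₀ _ (ne_of_gt h1tq)]
        rw [hpe, hqe]; module
      exact smul_right_injective _ (ne_of_gt h1tq) h6
    have e4 : β o p = β o q + β q p := hcoc o ho q hqΩ p hpΩ
    have hβqp : β q p = dΩ q p := hβseg q hqΩ p hpqs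
    have hdqp : 0 < dΩ q p := dOm_pos hcr hΩo hΩb hqΩ hpΩ hqpe
    rw [hβq, hβp, hβqp] at e4
    linarith
end

section
/- Let Ω be a bounded open strictly convex subset of Rⁿ with the Hilbert metric, and K a closed convex subset of Ω. Then for every x ∈ Ω there exists a unique point of K closest to x, and the resulting closest point projection map Ω → K is continuous. -/
/-!
Seen from a base point `x`, the Hilbert distance is explicit in the gauge `g` of `Ω` centred at
`x`: the boundary points on the line through `x` and `y` are `x + g (y - x)⁻¹ • (y - x)` and
`x + g (x - y)⁻¹ • (x - y)`, so the cross ratio gives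
`exp (2 d(x, y)) = (1 + g (x - y)) / (1 - g (y - x))`.
Hence `d` is continuous for the Euclidean topology, small `d(x, y)` forces `y` close to `x`, and
a bound on `d(p, q)` keeps `q` a fixed fraction of the way from `p` to the boundary, so sequences
at bounded distance from a convergent sequence have limit points in `Ω`. A minimising sequence
then yields a closest point, and limits of closest points are closest points, which gives
continuity once closest points are unique.

Uniqueness is strict convexity of Hilbert balls: `d(x, y) ≤ r` reads
`g (x - y) + M g (y - x) ≤ M - 1` with `M = exp (2 r)`, a convex condition. If the midpoint of two
points of the ball is not in the open ball, `g` is additive on `y₀ - x` and `y₁ - x`; a supporting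
hyperplane at the boundary point in the direction of their sum then contains a boundary segment,
so by strict convexity of `Ω` both lie on one ray from `x`, along which `d(x, ·)` is strictly
increasing.
-/

open Metric Set Filter Topology

namespace HilbertGeometry

theorem preimage_add_left_mem_nhds_zero {G : Type*} [TopologicalSpace G] [AddGroup G]
    [ContinuousAdd G] {s : Set G} {a : G} (hs : IsOpen s) (ha : a ∈ s) :
    (a + ·) ⁻¹' s ∈ 𝓝 (0 : G) :=
  (hs.preimage (continuous_const_add a)).mem_nhds (by simpa using ha)

variable {E : Type*} [NormedAddCommGroup E] [NormedSpace ℝ E] {Ω : Set E} {p q u v w x : E}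
  {c r R t : ℝ}

noncomputable def gaugeAt (Ω : Set E) (p v : E) : ℝ :=
  gauge ((p + ·) ⁻¹' Ω) v

theorem gaugeAt_nonneg (Ω : Set E) (p v : E) : 0 ≤ gaugeAt Ω p v :=
  gauge_nonneg v

theorem gaugeAt_smul (ht : 0 ≤ t) : gaugeAt Ω p (t • v) = t * gaugeAt Ω p v :=
  gauge_smul_of_nonneg ht v

theorem gaugeAt_add_le (hΩo : IsOpen Ω) (hΩc : Convex ℝ Ω) (hp : p ∈ Ω) (u v : E) :
    gaugeAt Ω p (u + v) ≤ gaugeAt Ω p u + gaugeAt Ω p v :=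
  gauge_add_le (hΩc.translate_preimage_right p)
    (absorbent_nhds_zero (preimage_add_left_mem_nhds_zero hΩo hp)) u v

theorem gaugeAt_sub_lt_one (hΩo : IsOpen Ω) (hq : q ∈ Ω) : gaugeAt Ω p (q - p) < 1 :=
  gauge_lt_one_of_mem_of_isOpen (hΩo.preimage (continuous_const_add p)) (by simpa using hq)

theorem gaugeAt_lt_iff (hΩo : IsOpen Ω) (hΩc : Convex ℝ Ω) (hp : p ∈ Ω) (hc : 0 < c) :
    gaugeAt Ω p v < c ↔ p + c⁻¹ • v ∈ Ω := by
  rw [← inv_mul_lt_one₀ hc, ← gaugeAt_smul (inv_nonneg.2 hc.le), gaugeAt,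
    gauge_lt_one_iff_mem_interior (hΩc.translate_preimage_right p)
      (preimage_add_left_mem_nhds_zero hΩo hp),
    (hΩo.preimage (continuous_const_add p)).interior_eq, mem_preimage]

theorem gaugeAt_le_iff (hΩo : IsOpen Ω) (hΩc : Convex ℝ Ω) (hp : p ∈ Ω) (hc : 0 < c) :
    gaugeAt Ω p v ≤ c ↔ p + c⁻¹ • v ∈ closure Ω := by
  have hcl : closure ((p + ·) ⁻¹' Ω) = (p + ·) ⁻¹' closure Ω :=
    ((Homeomorph.addLeft p).preimage_closure Ω).symm
  rw [← inv_mul_le_one₀ hc, ← gaugeAt_smul (inv_nonneg.2 hc.le), gaugeAt,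
    gauge_le_one_iff_mem_closure (hΩc.translate_preimage_right p)
      (preimage_add_left_mem_nhds_zero hΩo hp), hcl, mem_preimage]

theorem norm_le_mul_gaugeAt (hΩo : IsOpen Ω) (hp : p ∈ Ω) (hR : 0 < R)
    (hΩR : Ω ⊆ closedBall p R) (v : E) : ‖v‖ ≤ R * gaugeAt Ω p v := by
  have hsub : (p + ·) ⁻¹' Ω ⊆ closedBall 0 R := fun w hw => by
    simpa using hΩR hw
  have := le_gauge_of_subset_closedBall
    (absorbent_nhds_zero (preimage_add_left_mem_nhds_zero hΩo hp)) hR.le hsub (x := v)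
  rwa [div_le_iff₀' hR] at this

theorem gaugeAt_pos (hΩo : IsOpen Ω) (hΩb : Bornology.IsBounded Ω) (hp : p ∈ Ω) (hv : v ≠ 0) :
    0 < gaugeAt Ω p v := by
  obtain ⟨R, hR, hΩR⟩ := hΩb.subset_closedBall_lt 0 p
  exact pos_of_mul_pos_right ((norm_pos_iff.2 hv).trans_le (norm_le_mul_gaugeAt hΩo hp hR hΩR v))
    hR.le

theorem add_inv_gaugeAt_smul_mem_frontier (hΩo : IsOpen Ω) (hΩb : Bornology.IsBounded Ω)
    (hΩc : Convex ℝ Ω) (hp : p ∈ Ω) (hv : v ≠ 0) :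
    p + (gaugeAt Ω p v)⁻¹ • v ∈ frontier Ω := by
  have hg := gaugeAt_pos hΩo hΩb hp hv
  rw [hΩo.frontier_eq]
  exact ⟨(gaugeAt_le_iff hΩo hΩc hp hg).1 le_rfl, (gaugeAt_lt_iff hΩo hΩc hp hg).not.1 (lt_irrefl _)⟩

theorem continuousAt_gaugeAt (hΩo : IsOpen Ω) (hΩc : Convex ℝ Ω) (hp : p ∈ Ω) (v : E) :
    ContinuousAt (fun z : E × E => gaugeAt Ω z.1 z.2) (p, v) := by
  have hfst : ∀ᶠ z : E × E in 𝓝 (p, v), z.1 ∈ Ω :=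
    continuous_fst.continuousAt.eventually_mem (hΩo.mem_nhds hp)
  have hmove : ∀ s : ℝ, ContinuousAt (fun z : E × E => z.1 + s • z.2) (p, v) := fun s =>
    (continuous_fst.add (continuous_snd.const_smul s)).continuousAt
  refine tendsto_order.2 ⟨fun c hc => ?_, fun c hc => ?_⟩
  · rcases lt_or_ge c 0 with hc0 | hc0
    · exact Eventually.of_forall fun _ => hc0.trans_le (gaugeAt_nonneg _ _ _)
    obtain ⟨c', hcc', hc'⟩ := exists_between hc
    have hc'0 : 0 < c' := hc0.trans_lt hcc'
    have hout : p + c'⁻¹ • v ∈ (closure Ω)ᶜ := fun h =>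
      hc'.not_ge ((gaugeAt_le_iff hΩo hΩc hp hc'0).2 h)
    filter_upwards [hfst, (hmove c'⁻¹).eventually_mem (isClosed_closure.isOpen_compl.mem_nhds hout)]
      with z hz hzout
    exact hcc'.trans (not_le.1 fun h => hzout ((gaugeAt_le_iff hΩo hΩc hz hc'0).1 h))
  · have hc0 : 0 < c := (gaugeAt_nonneg _ _ _).trans_lt hc
    filter_upwards [hfst, (hmove c⁻¹).eventually_mem
      (hΩo.mem_nhds ((gaugeAt_lt_iff hΩo hΩc hp hc0).1 hc))] with z hz hzin
    exact (gaugeAt_lt_iff hΩo hΩc hz hc0).2 hzin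

def NoSegmentInFrontier (Ω : Set E) : Prop :=
  ∀ a ∈ frontier Ω, ∀ b ∈ frontier Ω, openSegment ℝ a b ⊆ frontier Ω → a = b

theorem eq_of_mem_openSegment_of_notMem (hΩo : IsOpen Ω) (hΩc : Convex ℝ Ω)
    (hstrict : NoSegmentInFrontier Ω)
    {a b m : E} (ha : a ∈ closure Ω) (hb : b ∈ closure Ω) (hm : m ∈ openSegment ℝ a b)
    (hmΩ : m ∉ Ω) : a = b := by
  obtain ⟨f, hf⟩ := geometric_hahn_banach_open_point hΩc hΩo hmΩ
  have hle : ∀ z ∈ closure Ω, f z ≤ f m := fun z hz =>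
    closure_minimal (fun y hy => (hf y hy).le) (isClosed_le f.continuous continuous_const) hz
  obtain ⟨s, t, hs, ht, hst, hm⟩ := hm
  have hfm : f m = s * f a + t * f b := by rw [← hm]; simp
  have hsum : s * (f m - f a) + t * (f m - f b) = 0 := by linear_combination f m * hst + hfm
  obtain ⟨hsa, htb⟩ := (add_eq_zero_iff_of_nonneg (mul_nonneg hs.le (sub_nonneg.2 (hle a ha)))
    (mul_nonneg ht.le (sub_nonneg.2 (hle b hb)))).1 hsum
  have hfa : f a = f m := (sub_eq_zero.1 ((mul_eq_zero.1 hsa).resolve_left hs.ne')).symm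
  have hfb : f b = f m := (sub_eq_zero.1 ((mul_eq_zero.1 htb).resolve_left ht.ne')).symm
  have hfront : segment ℝ a b ⊆ frontier Ω := by
    rintro _ ⟨s', t', hs', ht', hst', rfl⟩
    rw [hΩo.frontier_eq]
    refine ⟨hΩc.closure.segment_subset ha hb ⟨s', t', hs', ht', hst', rfl⟩, fun hz => ?_⟩
    have hfz : f (s' • a + t' • b) = f m := by
      simp only [map_add, map_smul, smul_eq_mul, hfa, hfb, ← add_mul, hst', one_mul]
    exact (hf _ hz).ne hfz
  exact hstrict a (hfront (left_mem_segment ℝ a b)) b (hfront (right_mem_segment ℝ a b))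
    ((openSegment_subset_segment ℝ a b).trans hfront)

theorem sameRay_of_gaugeAt_add_eq (hΩo : IsOpen Ω) (hΩb : Bornology.IsBounded Ω)
    (hΩc : Convex ℝ Ω)
    (hstrict : NoSegmentInFrontier Ω)
    (hp : p ∈ Ω) (h : gaugeAt Ω p (u + w) = gaugeAt Ω p u + gaugeAt Ω p w) :
    SameRay ℝ u w := by
  rcases eq_or_ne u 0 with rfl | hu
  · exact .zero_left w
  rcases eq_or_ne w 0 with rfl | hw
  · exact .zero_right u
  set a := gaugeAt Ω p u
  set b := gaugeAt Ω p w
  have ha : 0 < a := gaugeAt_pos hΩo hΩb hp hu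
  have hb : 0 < b := gaugeAt_pos hΩo hΩb hp hw
  have hab : a + b ≠ 0 := (add_pos ha hb).ne'
  have hmid : (a / (a + b)) • (p + a⁻¹ • u) + (b / (a + b)) • (p + b⁻¹ • w)
      = p + (a + b)⁻¹ • (u + w) := by
    match_scalars <;> field_simp
  have hdir : p + a⁻¹ • u = p + b⁻¹ • w := by
    refine eq_of_mem_openSegment_of_notMem hΩo hΩc hstrict
      ((gaugeAt_le_iff hΩo hΩc hp ha).1 le_rfl) ((gaugeAt_le_iff hΩo hΩc hp hb).1 le_rfl)
      ⟨a / (a + b), b / (a + b), by positivity, by positivity, by field_simp, rfl⟩ ?_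
    rw [hmid, ← gaugeAt_lt_iff hΩo hΩc hp (add_pos ha hb), h]
    exact lt_irrefl _
  set e := b⁻¹ • w
  have hu' : u = a • e := by rw [← add_left_cancel hdir, smul_inv_smul₀ ha.ne']
  have hw' : w = b • e := (smul_inv_smul₀ hb.ne' w).symm
  rw [hu', hw']
  exact sameRay_smul_smul_of_mul_nonneg (mul_nonneg ha.le hb.le)

theorem tendsto_gaugeAt {α : Type*} {l : Filter α} {f g : α → E} (hΩo : IsOpen Ω)
    (hΩc : Convex ℝ Ω) (hp : p ∈ Ω) (hf : Tendsto f l (𝓝 p)) (hg : Tendsto g l (𝓝 v)) :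
    Tendsto (fun i => gaugeAt Ω (f i) (g i)) l (𝓝 (gaugeAt Ω p v)) :=
  Tendsto.comp (g := fun z : E × E => gaugeAt Ω z.1 z.2) (f := fun i => (f i, g i))
    (continuousAt_gaugeAt hΩo hΩc hp v) (hf.prodMk_nhds hg)

noncomputable def hilbertDist (Ω : Set E) (p q : E) : ℝ :=
  (1 / 2) * Real.log ((1 + gaugeAt Ω p (p - q)) / (1 - gaugeAt Ω p (q - p)))

@[simp]
theorem hilbertDist_self : hilbertDist Ω p p = 0 := by
  simp [hilbertDist, gaugeAt]

theorem exp_two_mul_hilbertDist (hΩo : IsOpen Ω) (hq : q ∈ Ω) :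
    Real.exp (2 * hilbertDist Ω p q)
      = (1 + gaugeAt Ω p (p - q)) / (1 - gaugeAt Ω p (q - p)) := by
  have hpos : 0 < (1 + gaugeAt Ω p (p - q)) / (1 - gaugeAt Ω p (q - p)) :=
    div_pos (by linarith [gaugeAt_nonneg Ω p (p - q)])
      (sub_pos.2 (gaugeAt_sub_lt_one hΩo hq))
  rw [hilbertDist, ← mul_assoc, mul_one_div_cancel two_ne_zero, one_mul, Real.exp_log hpos]

theorem hilbertDist_le_iff (hΩo : IsOpen Ω) (hq : q ∈ Ω) :
    hilbertDist Ω p q ≤ r ↔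
      gaugeAt Ω p (p - q) + Real.exp (2 * r) * gaugeAt Ω p (q - p) ≤ Real.exp (2 * r) - 1 := by
  have h2 : hilbertDist Ω p q ≤ r ↔ 2 * hilbertDist Ω p q ≤ 2 * r := by
    constructor <;> intro h <;> linarith
  rw [h2, ← Real.exp_le_exp, exp_two_mul_hilbertDist hΩo hq,
    div_le_iff₀ (sub_pos.2 (gaugeAt_sub_lt_one hΩo hq))]
  constructor <;> intro h <;> linarith

theorem hilbertDist_lt_iff (hΩo : IsOpen Ω) (hq : q ∈ Ω) :
    hilbertDist Ω p q < r ↔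
      gaugeAt Ω p (p - q) + Real.exp (2 * r) * gaugeAt Ω p (q - p) < Real.exp (2 * r) - 1 := by
  have h2 : hilbertDist Ω p q < r ↔ 2 * hilbertDist Ω p q < 2 * r := by
    constructor <;> intro h <;> linarith
  rw [h2, ← Real.exp_lt_exp, exp_two_mul_hilbertDist hΩo hq,
    div_lt_iff₀ (sub_pos.2 (gaugeAt_sub_lt_one hΩo hq))]
  constructor <;> intro h <;> linarith

theorem hilbertDist_nonneg (hΩo : IsOpen Ω) (hq : q ∈ Ω) : 0 ≤ hilbertDist Ω p q := by
  by_contra! h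
  rw [hilbertDist_lt_iff hΩo hq, mul_zero, Real.exp_zero, sub_self, one_mul] at h
  linarith [gaugeAt_nonneg Ω p (p - q), gaugeAt_nonneg Ω p (q - p)]

theorem gaugeAt_le_of_hilbertDist_le (hΩo : IsOpen Ω) (hq : q ∈ Ω) (h : hilbertDist Ω p q ≤ R) :
    gaugeAt Ω p (q - p) ≤ 1 - Real.exp (-(2 * R)) := by
  have hM := Real.exp_pos (2 * R)
  have hB : gaugeAt Ω p (q - p) ≤ (Real.exp (2 * R) - 1) / Real.exp (2 * R) := by
    rw [le_div_iff₀ hM]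
    linarith [(hilbertDist_le_iff hΩo hq).1 h, gaugeAt_nonneg Ω p (p - q)]
  calc gaugeAt Ω p (q - p) ≤ (Real.exp (2 * R) - 1) / Real.exp (2 * R) := hB
    _ = 1 - Real.exp (-(2 * R)) := by rw [Real.exp_neg]; field_simp

theorem norm_sub_le_mul_exp_hilbertDist (hΩo : IsOpen Ω) (hp : p ∈ Ω) (hR : 0 < R)
    (hΩR : Ω ⊆ closedBall p R) (hq : q ∈ Ω) :
    ‖q - p‖ ≤ R * (Real.exp (2 * hilbertDist Ω p q) - 1) := by
  have h := (hilbertDist_le_iff hΩo hq (p := p)).1 le_rfl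
  have hB := mul_nonneg (Real.exp_pos (2 * hilbertDist Ω p q)).le
    (gaugeAt_nonneg Ω p (q - p))
  calc ‖q - p‖ = ‖p - q‖ := norm_sub_rev q p
    _ ≤ R * gaugeAt Ω p (p - q) := norm_le_mul_gaugeAt hΩo hp hR hΩR _
    _ ≤ R * (Real.exp (2 * hilbertDist Ω p q) - 1) :=
      mul_le_mul_of_nonneg_left (by linarith) hR.le

theorem tendsto_hilbertDist {α : Type*} {l : Filter α} {f g : α → E} (hΩo : IsOpen Ω)
    (hΩc : Convex ℝ Ω) (hp : p ∈ Ω) (hq : q ∈ Ω) (hf : Tendsto f l (𝓝 p))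
    (hg : Tendsto g l (𝓝 q)) :
    Tendsto (fun i => hilbertDist Ω (f i) (g i)) l (𝓝 (hilbertDist Ω p q)) := by
  have hA : Tendsto (fun i => gaugeAt Ω (f i) (f i - g i)) l (𝓝 (gaugeAt Ω p (p - q))) :=
    tendsto_gaugeAt hΩo hΩc hp hf (hf.sub hg)
  have hB : Tendsto (fun i => gaugeAt Ω (f i) (g i - f i)) l (𝓝 (gaugeAt Ω p (q - p))) :=
    tendsto_gaugeAt hΩo hΩc hp hf (hg.sub hf)
  have hnum : 1 + gaugeAt Ω p (p - q) ≠ 0 :=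
    (add_pos_of_pos_of_nonneg one_pos (gaugeAt_nonneg _ _ _)).ne'
  have hden : 1 - gaugeAt Ω p (q - p) ≠ 0 := (sub_pos.2 (gaugeAt_sub_lt_one hΩo hq)).ne'
  exact (((tendsto_const_nhds.add hA).div (tendsto_const_nhds.sub hB) hden).log
    (div_ne_zero hnum hden)).const_mul _

theorem dist_mul_dist_div_dist_mul_dist_eq (p : E) (hv : v ≠ 0) {α β : ℝ} (hα : 0 < α)
    (hβ : 0 < β) (hβ1 : β < 1) :
    dist (p + α⁻¹ • -v) (p + v) * dist (p + β⁻¹ • v) p /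
      (dist (p + α⁻¹ • -v) p * dist (p + β⁻¹ • v) (p + v)) = (1 + α) / (1 - β) := by
  have hdist : ∀ s t : ℝ, dist (p + s • v) (p + t • v) = |s - t| * ‖v‖ := fun s t => by
    rw [dist_add_left, dist_eq_norm, ← sub_smul, norm_smul, Real.norm_eq_abs]
  have h1 := hdist (-α⁻¹) 1
  have h2 := hdist β⁻¹ 0
  have h3 := hdist (-α⁻¹) 0
  have h4 := hdist β⁻¹ 1
  simp only [neg_smul, ← smul_neg, one_smul, zero_smul, add_zero, sub_zero] at h1 h2 h3 h4
  have hβ' : 1 < β⁻¹ := (one_lt_inv₀ hβ).2 hβ1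
  rw [h1, h2, h3, h4, abs_of_neg (by linarith [inv_pos.2 hα]), abs_of_pos (inv_pos.2 hβ),
    abs_neg, abs_of_pos (inv_pos.2 hα), abs_of_pos (by linarith)]
  have hvn := norm_pos_iff.2 hv
  have : 1 - β ≠ 0 := by linarith
  field_simp
  ring

theorem eq_hilbertDist_of_crossRatio (hΩo : IsOpen Ω) (hΩb : Bornology.IsBounded Ω)
    (hΩc : Convex ℝ Ω) {d : E → E → ℝ}
    (hcr : ∀ x ∈ Ω, ∀ y ∈ Ω, ∀ a b : E, a ∈ frontier Ω → b ∈ frontier Ω → x ≠ y →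
      x ∈ segment ℝ a y → y ∈ segment ℝ x b →
      d x y = (1/2) * |Real.log ((dist a y * dist b x) / (dist a x * dist b y))|)
    (hd0 : ∀ x ∈ Ω, d x x = 0) (hp : p ∈ Ω) (hq : q ∈ Ω) : d p q = hilbertDist Ω p q := by
  rcases eq_or_ne p q with rfl | hpq
  · rw [hd0 p hp, hilbertDist_self]
  obtain ⟨v, rfl⟩ : ∃ v, q = p + v := ⟨q - p, by abel⟩
  have hv : v ≠ 0 := by rintro rfl; simp at hpq
  set α := gaugeAt Ω p (-v)
  set β := gaugeAt Ω p v
  have hα : 0 < α := gaugeAt_pos hΩo hΩb hp (neg_ne_zero.2 hv)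
  have hβ : 0 < β := gaugeAt_pos hΩo hΩb hp hv
  have hβ1 : β < 1 := by simpa using gaugeAt_sub_lt_one hΩo hq (p := p)
  have hseg₁ : p ∈ segment ℝ (p + α⁻¹ • -v) (p + v) :=
    ⟨α / (1 + α), 1 / (1 + α), by positivity, by positivity, by field_simp; ring,
      by match_scalars <;> field_simp <;> ring⟩
  have hseg₂ : p + v ∈ segment ℝ p (p + β⁻¹ • v) :=
    ⟨1 - β, β, by linarith, hβ.le, by ring, by match_scalars <;> simp [hβ.ne']⟩
  rw [hcr p hp (p + v) hq _ _ (add_inv_gaugeAt_smul_mem_frontier hΩo hΩb hΩc hp (neg_ne_zero.2 hv))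
    (add_inv_gaugeAt_smul_mem_frontier hΩo hΩb hΩc hp hv) hpq hseg₁ hseg₂,
    dist_mul_dist_div_dist_mul_dist_eq p hv hα hβ hβ1, hilbertDist, sub_add_cancel_left,
    add_sub_cancel_left, abs_of_nonneg (Real.log_nonneg ((one_le_div (by linarith)).2
      (by linarith)))]

theorem hilbertDist_midpoint_lt (hΩo : IsOpen Ω) (hΩb : Bornology.IsBounded Ω)
    (hΩc : Convex ℝ Ω)
    (hstrict : NoSegmentInFrontier Ω)
    (hx : x ∈ Ω) {y₀ y₁ : E} (hy₀ : y₀ ∈ Ω) (hy₁ : y₁ ∈ Ω) (hne : y₀ ≠ y₁)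
    (h₀ : hilbertDist Ω x y₀ ≤ r) (h₁ : hilbertDist Ω x y₁ ≤ r) :
    hilbertDist Ω x (midpoint ℝ y₀ y₁) < r := by
  have hmid : midpoint ℝ y₀ y₁ ∈ Ω := hΩc.segment_subset hy₀ hy₁ (midpoint_mem_segment y₀ y₁)
  rw [hilbertDist_le_iff hΩo hy₀] at h₀
  rw [hilbertDist_le_iff hΩo hy₁] at h₁
  rw [hilbertDist_lt_iff hΩo hmid]
  by_contra! hge
  set M := Real.exp (2 * r)
  have hM : 0 < M := Real.exp_pos _
  obtain ⟨v₀, rfl⟩ : ∃ v, y₀ = x + v := ⟨y₀ - x, by abel⟩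
  obtain ⟨v₁, rfl⟩ : ∃ v, y₁ = x + v := ⟨y₁ - x, by abel⟩
  have hm₁ : midpoint ℝ (x + v₀) (x + v₁) - x = (1 / 2 : ℝ) • (v₀ + v₁) := by
    rw [midpoint_eq_smul_add, invOf_eq_inv]; module
  have hm₂ : x - midpoint ℝ (x + v₀) (x + v₁) = (1 / 2 : ℝ) • (-v₀ + -v₁) := by
    rw [midpoint_eq_smul_add, invOf_eq_inv]; module
  rw [hm₁, hm₂, gaugeAt_smul (by norm_num), gaugeAt_smul (by norm_num)] at hge
  simp only [add_sub_cancel_left, sub_add_cancel_left] at h₀ h₁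
  have hA := gaugeAt_add_le hΩo hΩc hx (-v₀) (-v₁)
  have hB := gaugeAt_add_le hΩo hΩc hx v₀ v₁
  have hBeq : gaugeAt Ω x (v₀ + v₁) = gaugeAt Ω x v₀ + gaugeAt Ω x v₁ := by
    refine le_antisymm hB (le_of_mul_le_mul_left ?_ hM)
    linarith
  obtain ⟨u, a, b, ha, hb, -, rfl, rfl⟩ :=
    (sameRay_of_gaugeAt_add_eq hΩo hΩb hΩc hstrict hx hBeq).exists_eq_smul
  rw [← smul_neg, gaugeAt_smul ha, gaugeAt_smul ha] at h₀
  rw [← smul_neg, gaugeAt_smul hb, gaugeAt_smul hb] at h₁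
  rw [← smul_neg, ← smul_neg, ← add_smul, gaugeAt_smul (add_nonneg ha hb), ← add_smul,
    gaugeAt_smul (add_nonneg ha hb)] at hge
  set S := gaugeAt Ω x (-u) + M * gaugeAt Ω x u
  have haS : a * S = M - 1 := by linarith
  have hbS : b * S = M - 1 := by linarith
  rcases mul_eq_zero.1 (by linear_combination haS - hbS : (a - b) * S = 0) with hab | hS
  · exact hne (by rw [sub_eq_zero.1 hab])
  · have hMu : M * gaugeAt Ω x u = 0 := by
      linarith [gaugeAt_nonneg Ω x (-u), mul_nonneg hM.le (gaugeAt_nonneg Ω x u)]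
    have hu : u = 0 := by
      by_contra hu
      exact (mul_pos hM (gaugeAt_pos hΩo hΩb hx hu)).ne' hMu
    exact hne (by simp [hu])

theorem eq_of_isMinOn_hilbertDist (hΩo : IsOpen Ω) (hΩb : Bornology.IsBounded Ω)
    (hΩc : Convex ℝ Ω)
    (hstrict : NoSegmentInFrontier Ω)
    {K : Set E} (hKΩ : K ⊆ Ω) (hKc : Convex ℝ K) (hx : x ∈ Ω) {y₀ y₁ : E} (hy₀ : y₀ ∈ K)
    (hy₁ : y₁ ∈ K) (h₀ : IsMinOn (hilbertDist Ω x) K y₀) (h₁ : IsMinOn (hilbertDist Ω x) K y₁) :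
    y₀ = y₁ := by
  by_contra hne
  have hmid := hKc.segment_subset hy₀ hy₁ (midpoint_mem_segment y₀ y₁)
  exact (isMinOn_iff.1 h₀ _ hmid).not_gt <| hilbertDist_midpoint_lt hΩo hΩb hΩc hstrict hx
    (hKΩ hy₀) (hKΩ hy₁) hne le_rfl (isMinOn_iff.1 h₁ y₀ hy₀)

theorem exists_subseq_tendsto_of_hilbertDist_le [ProperSpace E] (hΩo : IsOpen Ω)
    (hΩb : Bornology.IsBounded Ω) (hΩc : Convex ℝ Ω) (hp : p ∈ Ω) {pk qk : ℕ → E}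
    (hpk : Tendsto pk atTop (𝓝 p))
    (hq : ∀ᶠ k in atTop, qk k ∈ Ω ∧ hilbertDist Ω (pk k) (qk k) ≤ R) :
    ∃ w ∈ Ω, ∃ φ : ℕ → ℕ, StrictMono φ ∧ Tendsto (qk ∘ φ) atTop (𝓝 w) := by
  set c := max (1 - Real.exp (-(2 * R))) (1 / 2)
  have hc0 : 0 < c := lt_max_of_lt_right (by norm_num)
  have hc1 : c < 1 := max_lt (by linarith [Real.exp_pos (-(2 * R))]) (by norm_num)
  -- `qk k = (1 - c) • pk k + c • z` with `z ∈ closure Ω`, which keeps the limit off the boundary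
  have hfar : ∀ᶠ k in atTop, qk k ∈ Ω ∧ pk k + c⁻¹ • (qk k - pk k) ∈ closure Ω := by
    filter_upwards [hq, hpk.eventually_mem (hΩo.mem_nhds hp)] with k ⟨hqk, hdk⟩ hpk'
    exact ⟨hqk, (gaugeAt_le_iff hΩo hΩc hpk' hc0).1
      ((gaugeAt_le_of_hilbertDist_le hΩo hqk hdk).trans (le_max_left _ _))⟩
  obtain ⟨w, -, φ, hφ, hw⟩ := hΩb.isCompact_closure.tendsto_subseq'
    (hfar.mono fun k hk => subset_closure hk.1).frequently
  have hpφ := hpk.comp hφ.tendsto_atTop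
  have hfarw : p + c⁻¹ • (w - p) ∈ closure Ω :=
    isClosed_closure.mem_of_tendsto (hpφ.add ((hw.sub hpφ).const_smul c⁻¹))
      (hφ.tendsto_atTop.eventually (hfar.mono fun k hk => hk.2))
  have hw' : w = (1 - c) • p + c • (p + c⁻¹ • (w - p)) := by
    rw [smul_add, smul_inv_smul₀ hc0.ne']; module
  refine ⟨w, ?_, φ, hφ, hw⟩
  rw [hw', ← hΩo.interior_eq]
  exact hΩc.combo_interior_closure_mem_interior (by rwa [hΩo.interior_eq]) hfarw
    (by linarith) hc0.le (by ring)

theorem exists_isMinOn_hilbertDist [ProperSpace E] (hΩo : IsOpen Ω)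
    (hΩb : Bornology.IsBounded Ω) (hΩc : Convex ℝ Ω) {K : Set E} (hKΩ : K ⊆ Ω)
    (hKne : K.Nonempty) (hKcl : closure K ∩ Ω ⊆ K) (hx : x ∈ Ω) :
    ∃ y ∈ K, IsMinOn (hilbertDist Ω x) K y := by
  have hbdd : BddBelow (hilbertDist Ω x '' K) :=
    ⟨0, forall_mem_image.2 fun z hz => hilbertDist_nonneg hΩo (hKΩ hz)⟩
  obtain ⟨u, -, hu, huK⟩ := exists_seq_tendsto_sInf (hKne.image _) hbdd
  choose ys hysK hys using huK
  obtain ⟨w, hwΩ, φ, hφ, hw⟩ := exists_subseq_tendsto_of_hilbertDist_le hΩo hΩb hΩc hx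
    tendsto_const_nhds ((hu.eventually (gt_mem_nhds (lt_add_one _))).mono fun k hk =>
      ⟨hKΩ (hysK k), (hys k).le.trans hk.le⟩)
  have hwK : w ∈ K :=
    hKcl ⟨mem_closure_of_tendsto hw (Eventually.of_forall fun k => hysK (φ k)), hwΩ⟩
  have hlim : hilbertDist Ω x w = sInf (hilbertDist Ω x '' K) :=
    tendsto_nhds_unique (tendsto_hilbertDist hΩo hΩc hx hwΩ tendsto_const_nhds hw)
      (by simpa only [Function.comp_def, hys] using hu.comp hφ.tendsto_atTop)
  exact ⟨w, hwK, isMinOn_iff.2 fun z hz => hlim ▸ csInf_le hbdd (mem_image_of_mem _ hz)⟩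

theorem isMinOn_of_tendsto {ι : Type*} {l : Filter ι} [l.NeBot] (hΩo : IsOpen Ω)
    (hΩc : Convex ℝ Ω) {K : Set E} (hKΩ : K ⊆ Ω) (hx : x ∈ Ω) (hw : w ∈ Ω) {xs ys : ι → E}
    (hxs : Tendsto xs l (𝓝 x)) (hys : Tendsto ys l (𝓝 w))
    (hmin : ∀ᶠ i in l, IsMinOn (hilbertDist Ω (xs i)) K (ys i)) :
    IsMinOn (hilbertDist Ω x) K w :=
  isMinOn_iff.2 fun z hz =>
    le_of_tendsto_of_tendsto (tendsto_hilbertDist hΩo hΩc hx hw hxs hys)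
      (tendsto_hilbertDist hΩo hΩc hx (hKΩ hz) hxs tendsto_const_nhds)
      (hmin.mono fun _ hi => isMinOn_iff.1 hi z hz)

theorem continuousWithinAt_of_isMinOn_hilbertDist [ProperSpace E] (hΩo : IsOpen Ω)
    (hΩb : Bornology.IsBounded Ω) (hΩc : Convex ℝ Ω) {K : Set E} (hKΩ : K ⊆ Ω)
    (hKcl : closure K ∩ Ω ⊆ K) {proj : E → E}
    (hproj : ∀ x ∈ Ω, proj x ∈ K ∧ IsMinOn (hilbertDist Ω x) K (proj x)) (hx : x ∈ Ω)
    (huniq : ∀ y ∈ K, IsMinOn (hilbertDist Ω x) K y → y = proj x) :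
    ContinuousWithinAt proj Ω x := by
  refine tendsto_iff_seq_tendsto.2 fun xs hxs => ?_
  obtain ⟨hxs, hxsΩ⟩ := tendsto_nhdsWithin_iff.1 hxs
  refine tendsto_of_subseq_tendsto fun ns hns => ?_
  have hxns := hxs.comp hns
  have hΩns : ∀ᶠ k in atTop, xs (ns k) ∈ Ω := hns.eventually hxsΩ
  obtain ⟨hyK, hymin⟩ := hproj x hx
  have hbound : ∀ᶠ k in atTop, proj (xs (ns k)) ∈ Ω ∧
      hilbertDist Ω (xs (ns k)) (proj (xs (ns k))) ≤ hilbertDist Ω x (proj x) + 1 := by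
    filter_upwards [hΩns, (tendsto_hilbertDist hΩo hΩc hx (hKΩ hyK) hxns
      tendsto_const_nhds).eventually (gt_mem_nhds (lt_add_one _))] with k hk hk'
    exact ⟨hKΩ (hproj _ hk).1, (isMinOn_iff.1 (hproj _ hk).2 _ hyK).trans hk'.le⟩
  obtain ⟨w, hwΩ, φ, hφ, hw⟩ :=
    exists_subseq_tendsto_of_hilbertDist_le hΩo hΩb hΩc hx hxns hbound
  have hΩnsφ := hφ.tendsto_atTop.eventually hΩns
  have hwK : w ∈ K :=
    hKcl ⟨mem_closure_of_tendsto hw (hΩnsφ.mono fun k hk => (hproj _ hk).1), hwΩ⟩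
  have hwmin := isMinOn_of_tendsto hΩo hΩc hKΩ hx hwΩ (hxns.comp hφ.tendsto_atTop) hw
    (hΩnsφ.mono fun k hk => (hproj _ hk).2)
  exact ⟨φ, huniq w hwK hwmin ▸ hw⟩

theorem exists_forall_hilbertDist_lt_dist_lt (hΩo : IsOpen Ω) (hΩb : Bornology.IsBounded Ω)
    (hx : x ∈ Ω) {δ : ℝ} (hδ : 0 < δ) :
    ∃ η > 0, ∀ y ∈ Ω, hilbertDist Ω x y < η → dist y x < δ := by
  obtain ⟨R, hR, hΩR⟩ := hΩb.subset_closedBall_lt 0 x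
  have hlog : 0 < Real.log (1 + δ / R) := Real.log_pos (by linarith [div_pos hδ hR])
  refine ⟨Real.log (1 + δ / R) / 2, by positivity, fun y hy hxy => ?_⟩
  rw [dist_eq_norm]
  calc ‖y - x‖ ≤ R * (Real.exp (2 * hilbertDist Ω x y) - 1) :=
        norm_sub_le_mul_exp_hilbertDist hΩo hx hR hΩR hy
    _ < R * (Real.exp (2 * (Real.log (1 + δ / R) / 2)) - 1) := by gcongr
    _ = δ := by
      rw [mul_div_cancel₀ _ two_ne_zero, Real.exp_log (by positivity)]
      field_simp
      ring

theorem exists_forall_hilbertDist_lt_of_continuousWithinAt (hΩo : IsOpen Ω)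
    (hΩb : Bornology.IsBounded Ω) (hΩc : Convex ℝ Ω) {f : E → E}
    (hf : ContinuousWithinAt f Ω x) (hx : x ∈ Ω) (hfx : f x ∈ Ω) {ε : ℝ} (hε : 0 < ε) :
    ∃ η > 0, ∀ y ∈ Ω, hilbertDist Ω x y < η → hilbertDist Ω (f x) (f y) < ε := by
  obtain ⟨δ, hδ, hfδ⟩ := Metric.tendsto_nhds_nhds.1
    (tendsto_hilbertDist hΩo hΩc hfx hfx tendsto_const_nhds tendsto_id) ε hε
  obtain ⟨δ', hδ', hxδ'⟩ := Metric.continuousWithinAt_iff.1 hf δ hδ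
  obtain ⟨η, hη, hxη⟩ := exists_forall_hilbertDist_lt_dist_lt hΩo hΩb hx hδ'
  refine ⟨η, hη, fun y hy hxy => ?_⟩
  have h := hfδ (hxδ' hy (hxη y hy hxy))
  rw [hilbertDist_self, Real.dist_eq, sub_zero] at h
  exact (le_abs_self _).trans_lt h

end HilbertGeometry

open HilbertGeometry

/-- Let `Ω ⊆ ℝⁿ` be a bounded open strictly convex set with the Hilbert
metric `dΩ`, and `K ⊆ Ω` a nonempty convex subset which is closed in `(Ω, dΩ)`. Then
every `x ∈ Ω` has a unique closest point in `K`, and the resulting closest point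
projection `Ω → K` is continuous (with respect to the Hilbert metric). -/
theorem hilbert_proj_convex_exists_unique_continuous
    {n : ℕ} (Ω : Set (EuclideanSpace ℝ (Fin n)))
    (hΩo : IsOpen Ω) (hΩb : Bornology.IsBounded Ω) (hΩc : Convex ℝ Ω)
    (hstrict : ∀ a ∈ frontier Ω, ∀ b ∈ frontier Ω,
      openSegment ℝ a b ⊆ frontier Ω → a = b)
    (dΩ : EuclideanSpace ℝ (Fin n) → EuclideanSpace ℝ (Fin n) → ℝ)
    (hcr : ∀ x ∈ Ω, ∀ y ∈ Ω, ∀ a b : EuclideanSpace ℝ (Fin n),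
      a ∈ frontier Ω → b ∈ frontier Ω → x ≠ y →
      x ∈ segment ℝ a y → y ∈ segment ℝ x b →
      dΩ x y = (1/2) * |Real.log ((dist a y * dist b x) / (dist a x * dist b y))|)
    (hd0 : ∀ x ∈ Ω, dΩ x x = 0)
    (K : Set (EuclideanSpace ℝ (Fin n))) (hKΩ : K ⊆ Ω) (hKne : K.Nonempty)
    (hKc : Convex ℝ K)
    -- `K` is closed as a subset of `(Ω, dΩ)`
    (hKcl : ∀ x ∈ Ω, ∀ u : ℕ → EuclideanSpace ℝ (Fin n), (∀ m, u m ∈ K) →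
      Filter.Tendsto (fun m => dΩ x (u m)) Filter.atTop (nhds 0) → x ∈ K) :
    ∃ proj : EuclideanSpace ℝ (Fin n) → EuclideanSpace ℝ (Fin n),
      (∀ x ∈ Ω, proj x ∈ K ∧
        (∀ z ∈ K, dΩ x (proj x) ≤ dΩ x z) ∧
        (∀ y ∈ K, (∀ z ∈ K, dΩ x y ≤ dΩ x z) → y = proj x)) ∧
      (∀ x ∈ Ω, ∀ ε > (0:ℝ), ∃ η > (0:ℝ), ∀ x' ∈ Ω,
        dΩ x x' < η → dΩ (proj x) (proj x') < ε) := by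
  have hdΩ : ∀ p ∈ Ω, ∀ q ∈ Ω, dΩ p q = hilbertDist Ω p q := fun p hp q hq =>
    eq_hilbertDist_of_crossRatio hΩo hΩb hΩc hcr hd0 hp hq
  have hKcl' : closure K ∩ Ω ⊆ K := fun w ⟨hwK, hwΩ⟩ => by
    obtain ⟨u, huK, hu⟩ := mem_closure_iff_seq_limit.1 hwK
    refine hKcl w hwΩ u huK ?_
    simpa only [hilbertDist_self, hdΩ w hwΩ _ (hKΩ (huK _))] using
      tendsto_hilbertDist hΩo hΩc hwΩ hwΩ tendsto_const_nhds hu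
  have hmin : ∀ x ∈ Ω, ∀ y ∈ K,
      (∀ z ∈ K, dΩ x y ≤ dΩ x z) ↔ IsMinOn (hilbertDist Ω x) K y := fun x hx y hy => by
    rw [isMinOn_iff]
    exact forall₂_congr fun z hz => by rw [hdΩ x hx y (hKΩ hy), hdΩ x hx z (hKΩ hz)]
  choose! proj hprojK hprojmin using fun x (hx : x ∈ Ω) =>
    exists_isMinOn_hilbertDist hΩo hΩb hΩc hKΩ hKne hKcl' hx
  have huniq : ∀ x ∈ Ω, ∀ y ∈ K, IsMinOn (hilbertDist Ω x) K y → y = proj x :=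
    fun x hx y hy h => eq_of_isMinOn_hilbertDist hΩo hΩb hΩc hstrict hKΩ hKc hx hy
      (hprojK x hx) h (hprojmin x hx)
  refine ⟨proj, fun x hx => ⟨hprojK x hx, (hmin x hx _ (hprojK x hx)).2 (hprojmin x hx),
    fun y hy h => huniq x hx y hy ((hmin x hx y hy).1 h)⟩, fun x hx ε hε => ?_⟩
  obtain ⟨η, hη, hproj⟩ := exists_forall_hilbertDist_lt_of_continuousWithinAt hΩo hΩb hΩc
    (continuousWithinAt_of_isMinOn_hilbertDist hΩo hΩb hΩc hKΩ hKcl'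
      (fun x hx => ⟨hprojK x hx, hprojmin x hx⟩) hx (huniq x hx)) hx (hKΩ (hprojK x hx)) hε
  refine ⟨η, hη, fun x' hx' hxx' => ?_⟩
  rw [hdΩ _ (hKΩ (hprojK x hx)) _ (hKΩ (hprojK x' hx'))]
  exact hproj x' hx' (hdΩ x hx x' hx' ▸ hxx')
end

section
/- Let g ∈ GL(d,R) be a nontrivial unipotent matrix whose largest Jordan block has size k ≥ 2. Then there exist constants c₁, c₂ > 0 such that for all integers n with |n| ≥ 1, c₁|n|^{k−1} ≤ ‖gⁿ‖ ≤ c₂|n|^{k−1}, where ‖·‖ is the operator norm. -/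
open Finset

section Aux
variable {A : Type*} [NormedRing A] [NormedSpace ℝ A]

private lemma unip_expand (g : Aˣ) {k : ℕ}
    (hb : ((g : A) - 1) ^ k = 0) (n : ℕ) :
    (↑(g ^ n) : A) = ∑ m ∈ range k, (n.choose m : ℝ) • ((g : A) - 1) ^ m := by
  have hN : ∀ m, k ≤ m → ((g : A) - 1) ^ m = 0 := fun m hm => pow_eq_zero_of_le hm hb
  have h0 : (↑(g ^ n) : A) = (((g : A) - 1) + 1) ^ n := by
    rw [Units.val_pow_eq_pow_val, sub_add_cancel]
  rw [h0, (Commute.one_right ((g : A) - 1)).add_pow]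
  have hterm : ∀ m : ℕ, ((g : A) - 1) ^ m * 1 ^ (n - m) * (n.choose m : A)
      = (n.choose m : ℝ) • ((g : A) - 1) ^ m := by
    intro m
    rw [one_pow, mul_one, Nat.cast_smul_eq_nsmul, nsmul_eq_mul,
      (Nat.commute_cast (((g : A) - 1) ^ m) (n.choose m)).eq]
  simp only [hterm]
  have e1 : ∑ m ∈ range (n + 1), (n.choose m : ℝ) • ((g : A) - 1) ^ m
      = ∑ m ∈ range (max (n + 1) k), (n.choose m : ℝ) • ((g : A) - 1) ^ m := by
    refine Finset.sum_subset (Finset.range_subset_range.mpr (le_max_left _ _)) ?_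
    intro m _ hm
    have : n < m := Nat.lt_of_succ_le (not_lt.mp (by simpa using hm))
    simp [Nat.choose_eq_zero_of_lt this]
  have e2 : ∑ m ∈ range k, (n.choose m : ℝ) • ((g : A) - 1) ^ m
      = ∑ m ∈ range (max (n + 1) k), (n.choose m : ℝ) • ((g : A) - 1) ^ m := by
    refine Finset.sum_subset (Finset.range_subset_range.mpr (le_max_right _ _)) ?_
    intro m _ hm
    have : k ≤ m := not_lt.mp (by simpa using hm)
    simp [hN m this]
  rw [e1, ← e2]

private lemma unip_nat_bounds (g : Aˣ) {k : ℕ} (hk : 2 ≤ k)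
    (hb1 : ((g : A) - 1) ^ k = 0) (hb2 : ((g : A) - 1) ^ (k - 1) ≠ 0) :
    ∃ c₁ c₂ : ℝ, 0 < c₁ ∧ 0 < c₂ ∧ ∀ n : ℕ, 1 ≤ n →
      c₁ * (n : ℝ) ^ (k - 1) ≤ ‖(↑(g ^ n) : A)‖ ∧
      ‖(↑(g ^ n) : A)‖ ≤ c₂ * (n : ℝ) ^ (k - 1) := by
  have hA : Nontrivial A := nontrivial_of_ne _ _ hb2
  set N : A := (g : A) - 1 with hNdef
  have ha : 0 < ‖N ^ (k - 1)‖ := norm_pos_iff.mpr hb2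
  set a : ℝ := ‖N ^ (k - 1)‖ with hadef
  set B : ℝ := ∑ m ∈ range (k - 1), ‖N ^ m‖ with hBdef
  have hB0 : 0 ≤ B := Finset.sum_nonneg fun _ _ => norm_nonneg _
  set D : ℝ := 2 ^ (k - 1) * (Nat.factorial (k - 1) : ℝ) with hDdef
  have hD0 : 0 < D := by positivity
  -- upper bound constant
  set c₂ : ℝ := ∑ m ∈ range k, ‖N ^ m‖ with hc₂def
  have hc₂0 : 0 < c₂ := by
    refine lt_of_lt_of_le ha (Finset.single_le_sum (f := fun m => ‖N ^ m‖)
      (fun _ _ => norm_nonneg _) ?_)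
    exact Finset.mem_range.mpr (by omega)
  -- upper bound
  have hupper : ∀ n : ℕ, 1 ≤ n → ‖(↑(g ^ n) : A)‖ ≤ c₂ * (n : ℝ) ^ (k - 1) := by
    intro n hn
    rw [unip_expand g hb1 n]
    calc ‖∑ m ∈ range k, (n.choose m : ℝ) • N ^ m‖
        ≤ ∑ m ∈ range k, ‖(n.choose m : ℝ) • N ^ m‖ := norm_sum_le _ _
      _ ≤ ∑ m ∈ range k, (n : ℝ) ^ (k - 1) * ‖N ^ m‖ := by
          refine Finset.sum_le_sum fun m hm => ?_
          rw [norm_smul, Real.norm_natCast]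
          refine mul_le_mul_of_nonneg_right ?_ (norm_nonneg _)
          calc (n.choose m : ℝ) ≤ ((n ^ m : ℕ) : ℝ) := by
                exact_mod_cast Nat.choose_le_pow n m
            _ ≤ ((n ^ (k - 1) : ℕ) : ℝ) := by
                exact_mod_cast Nat.pow_le_pow_right hn (by
                  have := Finset.mem_range.mp hm; omega)
            _ = (n : ℝ) ^ (k - 1) := by push_cast; ring
      _ = c₂ * (n : ℝ) ^ (k - 1) := by
          rw [hc₂def, Finset.sum_mul]
          exact Finset.sum_congr rfl fun m _ => mul_comm _ _
  -- key lower identity : choose n (k-1) • N^(k-1) = g^n - partial sum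
  have hkey : ∀ n : ℕ, (n.choose (k - 1) : ℝ) * a
      ≤ ‖(↑(g ^ n) : A)‖ + ∑ m ∈ range (k - 1), (n.choose m : ℝ) * ‖N ^ m‖ := by
    intro n
    have hsplit : (↑(g ^ n) : A)
        = (∑ m ∈ range (k - 1), (n.choose m : ℝ) • N ^ m)
          + (n.choose (k - 1) : ℝ) • N ^ (k - 1) := by
      have hk1 : k - 1 + 1 = k := by omega
      have hss := Finset.sum_range_succ (fun m => (n.choose m : ℝ) • N ^ m) (k - 1)
      rw [hk1] at hss
      rw [unip_expand g hb1 n, hss]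
    have : ‖(n.choose (k - 1) : ℝ) • N ^ (k - 1)‖
        ≤ ‖(↑(g ^ n) : A)‖ + ‖∑ m ∈ range (k - 1), (n.choose m : ℝ) • N ^ m‖ := by
      have h2 : (n.choose (k - 1) : ℝ) • N ^ (k - 1)
          = (↑(g ^ n) : A) - ∑ m ∈ range (k - 1), (n.choose m : ℝ) • N ^ m := by
        rw [hsplit, add_sub_cancel_left]
      rw [h2]
      exact norm_sub_le _ _
    calc (n.choose (k - 1) : ℝ) * a = ‖(n.choose (k - 1) : ℝ) • N ^ (k - 1)‖ := by
          rw [norm_smul, Real.norm_natCast]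
      _ ≤ ‖(↑(g ^ n) : A)‖ + ‖∑ m ∈ range (k - 1), (n.choose m : ℝ) • N ^ m‖ := this
      _ ≤ _ := by
          gcongr
          refine (norm_sum_le _ _).trans (le_of_eq ?_)
          refine Finset.sum_congr rfl fun m _ => ?_
          rw [norm_smul, Real.norm_natCast]
  -- choose lower bound: for n ≥ 2k, n^(k-1) ≤ D * choose n (k-1)
  have hchoose : ∀ n : ℕ, 2 * k ≤ n → (n : ℝ) ^ (k - 1) ≤ D * (n.choose (k - 1) : ℝ) := by
    intro n hn
    have hnat : n ^ (k - 1) ≤ 2 ^ (k - 1) * ((k - 1).factorial * n.choose (k - 1)) := by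
      rw [← Nat.descFactorial_eq_factorial_mul_choose]
      calc n ^ (k - 1) ≤ (2 * (n - k)) ^ (k - 1) := by
            refine Nat.pow_le_pow_left ?_ _
            omega
        _ = 2 ^ (k - 1) * (n - k) ^ (k - 1) := by rw [Nat.mul_pow]
        _ ≤ 2 ^ (k - 1) * n.descFactorial (k - 1) := by
            refine Nat.mul_le_mul_left _ ?_
            rw [Nat.descFactorial_eq_prod_range]
            calc (n - k) ^ (k - 1) = ∏ _i ∈ range (k - 1), (n - k) := by simp
              _ ≤ ∏ i ∈ range (k - 1), (n - i) := by
                  refine Finset.prod_le_prod' fun i hi => ?_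
                  have := Finset.mem_range.mp hi
                  omega
    have := (Nat.cast_le (α := ℝ)).mpr hnat
    push_cast at this
    rw [hDdef]
    calc (n : ℝ) ^ (k - 1) ≤ 2 ^ (k - 1) * ((Nat.factorial (k - 1) : ℝ) * (n.choose (k - 1) : ℝ)) := this
      _ = 2 ^ (k - 1) * (Nat.factorial (k - 1) : ℝ) * (n.choose (k - 1) : ℝ) := by ring
  -- bound on the lower-order sum
  have hlow : ∀ n : ℕ, 1 ≤ n →
      ∑ m ∈ range (k - 1), (n.choose m : ℝ) * ‖N ^ m‖ ≤ B * (n : ℝ) ^ (k - 2) := by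
    intro n hn
    rw [hBdef, Finset.sum_mul]
    refine Finset.sum_le_sum fun m hm => ?_
    refine le_trans (mul_le_mul_of_nonneg_right ?_ (norm_nonneg (N ^ m)))
      (le_of_eq (mul_comm _ _))
    calc (n.choose m : ℝ) ≤ ((n ^ m : ℕ) : ℝ) := by exact_mod_cast Nat.choose_le_pow n m
      _ ≤ ((n ^ (k - 2) : ℕ) : ℝ) := by
          exact_mod_cast Nat.pow_le_pow_right hn (by
            have := Finset.mem_range.mp hm; omega)
      _ = (n : ℝ) ^ (k - 2) := by push_cast; ring
  -- threshold
  set n₀ : ℕ := max (2 * k) (⌈2 * D * B / a⌉₊ + 1) with hn₀def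
  have hn₀1 : 1 ≤ n₀ := le_trans (by omega) (le_max_left _ _)
  -- asymptotic lower bound
  have hasymp : ∀ n : ℕ, n₀ ≤ n → a / (2 * D) * (n : ℝ) ^ (k - 1) ≤ ‖(↑(g ^ n) : A)‖ := by
    intro n hn
    have h2k : 2 * k ≤ n := le_trans (le_max_left _ _) hn
    have hn1 : (1 : ℝ) ≤ (n : ℝ) := by exact_mod_cast le_trans (by omega) h2k
    have hBn : 2 * D * B ≤ a * n := by
      have h1 : 2 * D * B / a ≤ (⌈2 * D * B / a⌉₊ : ℝ) := Nat.le_ceil _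
      have h2 : ((⌈2 * D * B / a⌉₊ : ℕ) : ℝ) ≤ (n : ℝ) := by
        exact_mod_cast le_trans (le_trans (by omega) (le_max_right (2 * k) _)) hn
      have := le_trans h1 h2
      calc 2 * D * B = 2 * D * B / a * a := by field_simp
        _ ≤ (n : ℝ) * a := by
            exact mul_le_mul_of_nonneg_right this (le_of_lt ha)
        _ = a * n := by ring
    have hc := hchoose n h2k
    have hk2 : k - 2 + 1 = k - 1 := by omega
    have hpow : (n : ℝ) ^ (k - 1) = (n : ℝ) ^ (k - 2) * (n : ℝ) := by
      rw [← hk2, pow_succ]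
    have key := hkey n
    have hl := hlow n (by omega)
    -- choose * a ≥ a * n^{k-1} / D
    have h3 : a * (n : ℝ) ^ (k - 1) / D ≤ (n.choose (k - 1) : ℝ) * a := by
      rw [div_le_iff₀ hD0]
      calc a * (n : ℝ) ^ (k - 1) ≤ a * (D * (n.choose (k - 1) : ℝ)) := by
            exact mul_le_mul_of_nonneg_left hc (le_of_lt ha)
        _ = (n.choose (k - 1) : ℝ) * a * D := by ring
    -- B * n^{k-2} ≤ a/(2D) * n^{k-1}
    have h4 : B * (n : ℝ) ^ (k - 2) ≤ a / (2 * D) * (n : ℝ) ^ (k - 1) := by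
      rw [hpow, div_mul_eq_mul_div, le_div_iff₀ (by positivity)]
      have hp0 : (0 : ℝ) ≤ (n : ℝ) ^ (k - 2) := by positivity
      calc B * (n : ℝ) ^ (k - 2) * (2 * D) = 2 * D * B * (n : ℝ) ^ (k - 2) := by ring
        _ ≤ a * (n : ℝ) * (n : ℝ) ^ (k - 2) := mul_le_mul_of_nonneg_right hBn hp0
        _ = a * ((n : ℝ) ^ (k - 2) * (n : ℝ)) := by ring
    have h5 : a * (n : ℝ) ^ (k - 1) / D ≤ ‖(↑(g ^ n) : A)‖ + B * (n : ℝ) ^ (k - 2) :=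
      le_trans h3 (le_trans key (by gcongr))
    have h6 : a * (n : ℝ) ^ (k - 1) / D
        = a / (2 * D) * (n : ℝ) ^ (k - 1) + a / (2 * D) * (n : ℝ) ^ (k - 1) := by
      field_simp; ring
    nlinarith [h4, h5]
  -- finite part
  have hSne : (Finset.Icc 1 n₀).Nonempty := ⟨1, Finset.mem_Icc.mpr ⟨le_refl _, hn₀1⟩⟩
  set c' : ℝ := (Finset.Icc 1 n₀).inf' hSne
      (fun n => ‖(↑(g ^ n) : A)‖ / (n : ℝ) ^ (k - 1)) with hc'def
  have hc'pos : 0 < c' := by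
    rw [hc'def, Finset.lt_inf'_iff]
    intro n hn
    have hn1 : 1 ≤ n := (Finset.mem_Icc.mp hn).1
    have hgn : (↑(g ^ n) : A) ≠ 0 := Units.ne_zero _
    have : 0 < ‖(↑(g ^ n) : A)‖ := norm_pos_iff.mpr hgn
    have hp : (0 : ℝ) < (n : ℝ) ^ (k - 1) := by
      have : (0:ℝ) < (n : ℝ) := by exact_mod_cast hn1
      positivity
    positivity
  refine ⟨min (a / (2 * D)) c', c₂, lt_min (by positivity) hc'pos, hc₂0, fun n hn => ?_⟩
  refine ⟨?_, hupper n hn⟩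
  have hp : (0 : ℝ) < (n : ℝ) ^ (k - 1) := by
    have : (0:ℝ) < (n : ℝ) := by exact_mod_cast hn
    positivity
  rcases le_or_gt n n₀ with hcase | hcase
  · have hmem : n ∈ Finset.Icc 1 n₀ := Finset.mem_Icc.mpr ⟨hn, hcase⟩
    have := Finset.inf'_le (fun m : ℕ => ‖(↑(g ^ m) : A)‖ / (m : ℝ) ^ (k - 1)) hmem
    have h7 : c' ≤ ‖(↑(g ^ n) : A)‖ / (n : ℝ) ^ (k - 1) := by rw [hc'def]; exact this
    calc min (a / (2 * D)) c' * (n : ℝ) ^ (k - 1) ≤ c' * (n : ℝ) ^ (k - 1) := by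
          exact mul_le_mul_of_nonneg_right (min_le_right _ _) (le_of_lt hp)
      _ ≤ ‖(↑(g ^ n) : A)‖ / (n : ℝ) ^ (k - 1) * (n : ℝ) ^ (k - 1) :=
          mul_le_mul_of_nonneg_right h7 (le_of_lt hp)
      _ = ‖(↑(g ^ n) : A)‖ := by field_simp
  · calc min (a / (2 * D)) c' * (n : ℝ) ^ (k - 1)
        ≤ a / (2 * D) * (n : ℝ) ^ (k - 1) :=
          mul_le_mul_of_nonneg_right (min_le_left _ _) (le_of_lt hp)
      _ ≤ ‖(↑(g ^ n) : A)‖ := hasymp n (le_of_lt hcase)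

private lemma inv_sub_one_pow {R : Type*} [Ring R] (g : Rˣ) (m : ℕ) :
    ((↑g⁻¹ : R) - 1) ^ m = (-1) ^ m * ((↑g⁻¹ : R) ^ m * ((g : R) - 1) ^ m) := by
  have hc : Commute ((↑g⁻¹ : R)) ((g : R) - 1) := by
    have h1 : Commute ((↑g⁻¹ : R)) (g : R) := by
      show (↑g⁻¹ : R) * g = g * ↑g⁻¹
      rw [Units.inv_mul, Units.mul_inv]
    exact h1.sub_right (Commute.one_right _)
  have h1 : (↑g⁻¹ : R) - 1 = -((↑g⁻¹ : R) * ((g : R) - 1)) := by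
    rw [mul_sub, mul_one, Units.inv_mul, neg_sub]
  rw [h1, neg_pow, hc.mul_pow]

private lemma inv_block_zero {R : Type*} [Ring R] (g : Rˣ) {k : ℕ}
    (hb : ((g : R) - 1) ^ k = 0) : ((↑g⁻¹ : R) - 1) ^ k = 0 := by
  rw [inv_sub_one_pow, hb, mul_zero, mul_zero]

private lemma inv_block_ne_zero {R : Type*} [Ring R] (g : Rˣ) {k : ℕ}
    (hb : ((g : R) - 1) ^ k ≠ 0) : ((↑g⁻¹ : R) - 1) ^ k ≠ 0 := by
  intro h
  apply hb
  rw [inv_sub_one_pow] at h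
  have h2 : (↑g⁻¹ : R) ^ k * ((g : R) - 1) ^ k = 0 := by
    have hu : IsUnit ((-1 : R) ^ k) := (IsUnit.neg isUnit_one).pow k
    rcases hu with ⟨u, hu⟩
    rw [← hu] at h
    exact (Units.mul_right_eq_zero u).mp h
  have h3 := congrArg (fun x => ((g : R) ^ k) * x) h2
  simp only [mul_zero] at h3
  rw [← mul_assoc] at h3
  have h4u : g ^ k * g⁻¹ ^ k = 1 := by
    rw [inv_pow, mul_inv_cancel]
  have h4 : (g : R) ^ k * (↑g⁻¹ : R) ^ k = 1 := by
    rw [← Units.val_pow_eq_pow_val, ← Units.val_pow_eq_pow_val, ← Units.val_mul, h4u,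
      Units.val_one]
  rw [h4, one_mul] at h3
  exact h3

end Aux

/-- Let `g ∈ GL(d,ℝ)` be a nontrivial unipotent matrix whose largest
Jordan block has size `k ≥ 2` (equivalently, `(g-1)^k = 0` and `(g-1)^(k-1) ≠ 0`).
Then there are constants `c₁, c₂ > 0` with `c₁ |n|^(k-1) ≤ ‖gⁿ‖ ≤ c₂ |n|^(k-1)` for
all integers `|n| ≥ 1`, where `‖·‖` is the operator norm.  We realize `g` as an
invertible continuous linear operator on Euclidean space `ℝᵈ`. -/
theorem unipotent_power_norm_growth
    (d k : ℕ) (hk : 2 ≤ k)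
    (g : (EuclideanSpace ℝ (Fin d) →L[ℝ] EuclideanSpace ℝ (Fin d))ˣ)
    (hunip : ((g : EuclideanSpace ℝ (Fin d) →L[ℝ] EuclideanSpace ℝ (Fin d)) - 1) ^ d = 0)
    (hblock₁ : ((g : EuclideanSpace ℝ (Fin d) →L[ℝ] EuclideanSpace ℝ (Fin d)) - 1) ^ k = 0)
    (hblock₂ : ((g : EuclideanSpace ℝ (Fin d) →L[ℝ] EuclideanSpace ℝ (Fin d)) - 1) ^ (k - 1) ≠ 0) :
    ∃ c₁ c₂ : ℝ, 0 < c₁ ∧ 0 < c₂ ∧ ∀ n : ℤ, 1 ≤ |n| →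
      c₁ * (|n| : ℝ) ^ (k - 1) ≤
        ‖((g ^ n : (EuclideanSpace ℝ (Fin d) →L[ℝ] EuclideanSpace ℝ (Fin d))ˣ) :
            EuclideanSpace ℝ (Fin d) →L[ℝ] EuclideanSpace ℝ (Fin d))‖ ∧
      ‖((g ^ n : (EuclideanSpace ℝ (Fin d) →L[ℝ] EuclideanSpace ℝ (Fin d))ˣ) :
            EuclideanSpace ℝ (Fin d) →L[ℝ] EuclideanSpace ℝ (Fin d))‖ ≤
        c₂ * (|n| : ℝ) ^ (k - 1) := by
  obtain ⟨c₁, c₂, hc₁, hc₂, H⟩ := unip_nat_bounds g hk hblock₁ hblock₂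
  obtain ⟨c₁', c₂', hc₁', hc₂', H'⟩ :=
    unip_nat_bounds g⁻¹ hk (inv_block_zero g hblock₁) (inv_block_ne_zero g hblock₂)
  refine ⟨min c₁ c₁', max c₂ c₂', lt_min hc₁ hc₁', lt_of_lt_of_le hc₂ (le_max_left _ _),
    fun n hn => ?_⟩
  have hpow : (0 : ℝ) ≤ (|n| : ℝ) ^ (k - 1) := by positivity
  rcases lt_trichotomy n 0 with hneg | hzero | hpos
  · obtain ⟨m, hm⟩ : ∃ m : ℕ, (m : ℤ) = -n :=
      ⟨(-n).toNat, Int.toNat_of_nonneg (by omega)⟩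
    have hm1 : 1 ≤ m := by omega
    have habs : (|n| : ℝ) = (m : ℝ) := by
      have : |n| = (m : ℤ) := by rw [abs_of_neg hneg]; omega
      exact_mod_cast congrArg (Int.cast : ℤ → ℝ) this
    have hgn : g ^ n = g⁻¹ ^ m := by
      rw [← zpow_natCast g⁻¹ m, hm, inv_zpow, ← zpow_neg, neg_neg]
    obtain ⟨hl, hr⟩ := H' m hm1
    rw [hgn, habs]
    constructor
    · exact le_trans (mul_le_mul_of_nonneg_right (min_le_right _ _) (by positivity)) hl
    · exact le_trans hr (mul_le_mul_of_nonneg_right (le_max_right _ _) (by positivity))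
  · rw [hzero] at hn; simp at hn
  · obtain ⟨m, hm⟩ : ∃ m : ℕ, (m : ℤ) = n :=
      ⟨n.toNat, Int.toNat_of_nonneg (by omega)⟩
    have hm1 : 1 ≤ m := by omega
    have habs : (|n| : ℝ) = (m : ℝ) := by
      have : |n| = (m : ℤ) := by rw [abs_of_pos hpos]; omega
      exact_mod_cast congrArg (Int.cast : ℤ → ℝ) this
    have hgn : g ^ n = g ^ m := by rw [← zpow_natCast g m, hm]
    obtain ⟨hl, hr⟩ := H m hm1
    rw [hgn, habs]
    constructor
    · exact le_trans (mul_le_mul_of_nonneg_right (min_le_left _ _) (by positivity)) hl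
    · exact le_trans hr (mul_le_mul_of_nonneg_right (le_max_left _ _) (by positivity))
end

section
/- Let (X,d) be a δ-hyperbolic geodesic space with base point o, and let H₁, H₂ be disjoint horoballs based at boundary points ξ₁, ξ₂. Let q_i be the first intersection point of the geodesic ray [o,ξ_i) with H_i. Then ⟨ξ₁,ξ₂⟩_o ≤ (d(o,q₁) + d(o,q₂))/2 + O(δ), where the implicit constant depends only on δ. -/
open Filter

/-- On a unit-speed ray, the Busemann function of the ray equals `-s`. -/
lemma busemann_ray_aux {X : Type} [MetricSpace X] (γ : ℝ → X)
    (hγ : ∀ s ≥ (0:ℝ), ∀ t ≥ (0:ℝ), dist (γ s) (γ t) = |s - t|)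
    (β : X → ℝ) (hβ : ∀ x : X, Tendsto (fun t => dist x (γ t) - t) atTop (nhds (β x)))
    (s : ℝ) (hs : 0 ≤ s) : β (γ s) = -s := by
  have hconst : Tendsto (fun t => dist (γ s) (γ t) - t) atTop (nhds (-s)) := by
    have hev : (fun _ : ℝ => -s) =ᶠ[atTop] fun t => dist (γ s) (γ t) - t := by
      filter_upwards [eventually_ge_atTop s, eventually_ge_atTop (0:ℝ)] with t ht ht0
      rw [hγ s hs t ht0, abs_of_nonpos (by linarith)]
      ring
    exact tendsto_const_nhds.congr' hev
  exact tendsto_nhds_unique (hβ (γ s)) hconst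

lemma horoball_gromov_aux (δ : ℝ) (hδ : 0 ≤ δ) {X : Type} [MetricSpace X]
    (hhyp : ∀ x y z w : X,
      (dist x w + dist y w - dist x y) / 2 ≥
        min ((dist x w + dist z w - dist x z) / 2)
            ((dist z w + dist y w - dist z y) / 2) - δ)
    (o : X) (γ₁ γ₂ : ℝ → X)
    (hγ₁0 : γ₁ 0 = o) (hγ₂0 : γ₂ 0 = o)
    (hγ₁ : ∀ s ≥ (0:ℝ), ∀ t ≥ (0:ℝ), dist (γ₁ s) (γ₁ t) = |s - t|)
    (hγ₂ : ∀ s ≥ (0:ℝ), ∀ t ≥ (0:ℝ), dist (γ₂ s) (γ₂ t) = |s - t|)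
    (β₁ β₂ : X → ℝ)
    (hβ₁ : ∀ x : X, Tendsto (fun t => dist x (γ₁ t) - t) atTop (nhds (β₁ x)))
    (hβ₂ : ∀ x : X, Tendsto (fun t => dist x (γ₂ t) - t) atTop (nhds (β₂ x)))
    (c₁ c₂ : ℝ)
    (hdisj : ∀ x : X, β₁ x ≤ c₁ → β₂ x ≤ c₂ → False)
    (t₁ t₂ : ℝ) (ht₁ : 0 ≤ t₁) (ht₂ : 0 ≤ t₂)
    (hc₁ : -t₁ ≤ c₁) (hc₂ : -t₂ ≤ c₂) (hle : t₂ ≤ t₁)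
    (G : ℝ)
    (hG : Tendsto
      (fun t => (dist (γ₁ t) o + dist (γ₂ t) o - dist (γ₁ t) (γ₂ t)) / 2)
      atTop (nhds G)) :
    G ≤ (t₁ + t₂) / 2 + 4 * δ := by
  by_contra hcon
  push_neg at hcon
  set s : ℝ := t₁ + 4 * δ with hs_def
  have hs : 0 ≤ s := by positivity
  have d1o : ∀ u, 0 ≤ u → dist (γ₁ u) o = u := by
    intro u hu
    rw [← hγ₁0, hγ₁ u hu 0 le_rfl, sub_zero, abs_of_nonneg hu]
  have d2o : ∀ u, 0 ≤ u → dist (γ₂ u) o = u := by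
    intro u hu
    rw [← hγ₂0, hγ₂ u hu 0 le_rfl, sub_zero, abs_of_nonneg hu]
  -- the Busemann value of γ₁ s along γ₂ is at most s - 2 min s G + 4δ
  have key : β₂ (γ₁ s) ≤ s - 2 * min s G + 4 * δ := by
    have L1 : Tendsto (fun t => (s + t - dist (γ₁ s) (γ₂ t)) / 2) atTop
        (nhds ((s - β₂ (γ₁ s)) / 2)) := by
      have := ((tendsto_const_nhds : Tendsto (fun _ : ℝ => s) atTop (nhds s)).sub (hβ₂ (γ₁ s))).div_const (2:ℝ)
      exact this.congr (fun t => by ring)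
    have step : ∀ᶠ T in atTop,
        min s ((dist (γ₁ T) o + dist (γ₂ T) o - dist (γ₁ T) (γ₂ T)) / 2) - 2 * δ
          ≤ (s - β₂ (γ₁ s)) / 2 := by
      have hbd : ∀ᶠ T in atTop,
          (dist (γ₁ T) o + dist (γ₂ T) o - dist (γ₁ T) (γ₂ T)) / 2 ≤ G + 1 :=
        (hG.eventually (gt_mem_nhds (lt_add_one G))).mono fun T hT => hT.le
      filter_upwards [hbd, eventually_ge_atTop s, eventually_ge_atTop (G + 1)]
        with T hT1 hTs hTG
      have hT0 : (0:ℝ) ≤ T := le_trans hs hTs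
      rw [d1o T hT0, d2o T hT0] at hT1 ⊢
      set a : ℝ := (T + T - dist (γ₁ T) (γ₂ T)) / 2 with ha_def
      refine ge_of_tendsto L1 ?_
      filter_upwards [eventually_ge_atTop T, eventually_ge_atTop (0:ℝ)] with t htT ht0
      have h1 := hhyp (γ₁ s) (γ₂ t) (γ₁ T) o
      have h2 := hhyp (γ₁ T) (γ₂ t) (γ₂ T) o
      rw [d1o s hs, d2o t ht0, d1o T hT0] at h1
      rw [d1o T hT0, d2o t ht0, d2o T hT0] at h2
      have e1 : dist (γ₁ s) (γ₁ T) = T - s := by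
        rw [hγ₁ s hs T hT0, abs_sub_comm, abs_of_nonneg (by linarith)]
      have e2 : dist (γ₂ T) (γ₂ t) = t - T := by
        rw [hγ₂ T hT0 t ht0, abs_sub_comm, abs_of_nonneg (by linarith)]
      rw [e1] at h1
      rw [e2] at h2
      have e3 : (s + T - (T - s)) / 2 = s := by ring
      have e4 : (T + t - (t - T)) / 2 = T := by ring
      rw [e3] at h1
      rw [e4] at h2
      have ha : min a T = a := min_eq_left (by linarith)
      rw [ha] at h2
      set P : ℝ := (T + t - dist (γ₁ T) (γ₂ t)) / 2
      have hmin : min s a - δ ≤ min s P :=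
        le_min (by linarith [min_le_left s a]) (by linarith [min_le_right s a])
      linarith [h1, hmin]
    have L2 : Tendsto
        (fun T => min s ((dist (γ₁ T) o + dist (γ₂ T) o - dist (γ₁ T) (γ₂ T)) / 2) - 2 * δ)
        atTop (nhds (min s G - 2 * δ)) :=
      (tendsto_const_nhds.min hG).sub_const _
    have := le_of_tendsto L2 step
    linarith
  have hb1 : β₁ (γ₁ s) = -s := busemann_ray_aux γ₁ hγ₁ β₁ hβ₁ s hs
  refine hdisj (γ₁ s) (by rw [hb1]; linarith) ?_
  rcases le_total s G with h | h
  · rw [min_eq_left h] at key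
    linarith
  · rw [min_eq_right h] at key
    linarith

/-- In a δ-hyperbolic geodesic space with base point `o`, if `H₁, H₂`
are disjoint horoballs based at boundary points `ξ₁, ξ₂` (represented by geodesic
rays `γ₁, γ₂` from `o` with Busemann functions `β₁, β₂`), and `qᵢ` is the entry point
of the ray `[o,ξᵢ)` into `Hᵢ`, then `⟨ξ₁,ξ₂⟩_o ≤ (d(o,q₁) + d(o,q₂))/2 + O(δ)`. -/
theorem gromov_product_le_of_disjoint_horoballs (δ : ℝ) (hδ : 0 ≤ δ) :
    ∃ C : ℝ, ∀ (X : Type) (_ : MetricSpace X)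
      (hhyp : ∀ x y z w : X,
        (dist x w + dist y w - dist x y) / 2 ≥
          min ((dist x w + dist z w - dist x z) / 2)
              ((dist z w + dist y w - dist z y) / 2) - δ)
      (o : X) (γ₁ γ₂ : ℝ → X)
      (hγ₁0 : γ₁ 0 = o) (hγ₂0 : γ₂ 0 = o)
      (hγ₁ : ∀ s ≥ (0:ℝ), ∀ t ≥ (0:ℝ), dist (γ₁ s) (γ₁ t) = |s - t|)
      (hγ₂ : ∀ s ≥ (0:ℝ), ∀ t ≥ (0:ℝ), dist (γ₂ s) (γ₂ t) = |s - t|)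
      (β₁ β₂ : X → ℝ)
      (hβ₁ : ∀ x : X, Tendsto (fun t => dist x (γ₁ t) - t) atTop (nhds (β₁ x)))
      (hβ₂ : ∀ x : X, Tendsto (fun t => dist x (γ₂ t) - t) atTop (nhds (β₂ x)))
      (c₁ c₂ : ℝ) (H₁ H₂ : Set X)
      (hH₁ : H₁ = {x | β₁ x ≤ c₁}) (hH₂ : H₂ = {x | β₂ x ≤ c₂})
      (hdisj : H₁ ∩ H₂ = ∅)
      (t₁ t₂ : ℝ) (ht₁ : 0 ≤ t₁) (ht₂ : 0 ≤ t₂)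
      (q₁ q₂ : X) (hq₁ : q₁ = γ₁ t₁) (hq₂ : q₂ = γ₂ t₂)
      (hentry₁ : q₁ ∈ H₁ ∧ ∀ s, 0 ≤ s → s < t₁ → γ₁ s ∉ H₁)
      (hentry₂ : q₂ ∈ H₂ ∧ ∀ s, 0 ≤ s → s < t₂ → γ₂ s ∉ H₂)
      (G : ℝ)
      (hG : Tendsto
        (fun t => (dist (γ₁ t) o + dist (γ₂ t) o - dist (γ₁ t) (γ₂ t)) / 2)
        atTop (nhds G)),
      G ≤ (dist o q₁ + dist o q₂) / 2 + C := by
  refine ⟨4 * δ, ?_⟩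
  intro X _ hhyp o γ₁ γ₂ hγ₁0 hγ₂0 hγ₁ hγ₂ β₁ β₂ hβ₁ hβ₂ c₁ c₂ H₁ H₂ hH₁ hH₂ hdisj
    t₁ t₂ ht₁ ht₂ q₁ q₂ hq₁ hq₂ hentry₁ hentry₂ G hG
  have hb1 : β₁ (γ₁ t₁) = -t₁ := busemann_ray_aux γ₁ hγ₁ β₁ hβ₁ t₁ ht₁
  have hb2 : β₂ (γ₂ t₂) = -t₂ := busemann_ray_aux γ₂ hγ₂ β₂ hβ₂ t₂ ht₂
  have hc₁ : -t₁ ≤ c₁ := by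
    have := hentry₁.1
    rw [hH₁, hq₁] at this
    rw [← hb1]; exact this
  have hc₂ : -t₂ ≤ c₂ := by
    have := hentry₂.1
    rw [hH₂, hq₂] at this
    rw [← hb2]; exact this
  have hdisj' : ∀ x : X, β₁ x ≤ c₁ → β₂ x ≤ c₂ → False := by
    intro x h1 h2
    have hx : x ∈ H₁ ∩ H₂ := ⟨by rw [hH₁]; exact h1, by rw [hH₂]; exact h2⟩
    rw [hdisj] at hx
    exact hx
  have hdq₁ : dist o q₁ = t₁ := by
    rw [hq₁, dist_comm, ← hγ₁0, hγ₁ t₁ ht₁ 0 le_rfl, sub_zero, abs_of_nonneg ht₁]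
  have hdq₂ : dist o q₂ = t₂ := by
    rw [hq₂, dist_comm, ← hγ₂0, hγ₂ t₂ ht₂ 0 le_rfl, sub_zero, abs_of_nonneg ht₂]
  rw [hdq₁, hdq₂]
  rcases le_total t₂ t₁ with h | h
  · exact horoball_gromov_aux δ hδ hhyp o γ₁ γ₂ hγ₁0 hγ₂0 hγ₁ hγ₂ β₁ β₂ hβ₁ hβ₂
      c₁ c₂ hdisj' t₁ t₂ ht₁ ht₂ hc₁ hc₂ h G hG
  · have hG' : Tendsto
        (fun t => (dist (γ₂ t) o + dist (γ₁ t) o - dist (γ₂ t) (γ₁ t)) / 2)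
        atTop (nhds G) :=
      hG.congr (fun t => by rw [dist_comm (γ₁ t) (γ₂ t)]; ring)
    have := horoball_gromov_aux δ hδ hhyp o γ₂ γ₁ hγ₂0 hγ₁0 hγ₂ hγ₁ β₂ β₁ hβ₂ hβ₁
      c₂ c₁ (fun x h2 h1 => hdisj' x h1 h2) t₂ t₁ ht₂ ht₁ hc₂ hc₁ h G hG'
    linarith
end

section
/- Let (X,d) be a δ-hyperbolic geodesic space with base point o, let p, ξ ∈ ∂X be distinct boundary points, let q ∈ [o,p) and w ∈ [o,ξ) be points with β_p(o,w) ≥ β_p(o,q). Then there exists z ∈ [o,ξ) such that β_p(o,z) ≥ (d(o,q) + d(o,w))/2 − O(δ). -/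
open Filter

/-- In a δ-hyperbolic geodesic space with base point `o`, boundary
points `p, ξ` (represented by geodesic rays `γp, γξ` from `o`, with `β` the Busemann
function at `p`), if `q ∈ [o,p)` and `w ∈ [o,ξ)` satisfy `β_p(o,w) ≥ β_p(o,q)`, then
there exists `z ∈ [o,ξ)` with `β_p(o,z) ≥ (d(o,q) + d(o,w))/2 - O(δ)`.
Here `β x` denotes `β_p(o,x) = lim (d(o, γp t) - d(x, γp t))`. -/
theorem busemann_sqrt_lemma (δ : ℝ) (hδ : 0 ≤ δ) :
    ∃ C : ℝ, ∀ (X : Type) (_ : MetricSpace X)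
      (hhyp : ∀ x y z w : X,
        (dist x w + dist y w - dist x y) / 2 ≥
          min ((dist x w + dist z w - dist x z) / 2)
              ((dist z w + dist y w - dist z y) / 2) - δ)
      (o : X) (γp γξ : ℝ → X)
      (hγp0 : γp 0 = o) (hγξ0 : γξ 0 = o)
      (hγp : ∀ s ≥ (0:ℝ), ∀ t ≥ (0:ℝ), dist (γp s) (γp t) = |s - t|)
      (hγξ : ∀ s ≥ (0:ℝ), ∀ t ≥ (0:ℝ), dist (γξ s) (γξ t) = |s - t|)
      (β : X → ℝ)
      (hβ : ∀ x : X,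
        Tendsto (fun t => dist o (γp t) - dist x (γp t)) atTop (nhds (β x)))
      (s u : ℝ) (hs : 0 ≤ s) (hu : 0 ≤ u)
      (q w : X) (hq : q = γp s) (hw : w = γξ u)
      (hbqw : β w ≥ β q),
      ∃ v : ℝ, 0 ≤ v ∧
        β (γξ v) ≥ (dist o q + dist o w) / 2 - C := by
  refine ⟨2 * δ, ?_⟩
  intro X _ hhyp o γp γξ hγp0 hγξ0 hγp hγξ β hβ s u hs hu q w hq hw hbqw
  -- basic distance computations
  have hdop : ∀ t ≥ (0:ℝ), dist o (γp t) = t := by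
    intro t ht
    rw [← hγp0, hγp 0 le_rfl t ht, abs_of_nonpos (by linarith)]
    ring
  have hdoq : dist o q = s := by
    rw [hq, ← hγp0, hγp 0 le_rfl s hs, abs_of_nonpos (by linarith)]; ring
  have hdow : dist o w = u := by
    rw [hw, ← hγξ0, hγξ 0 le_rfl u hu, abs_of_nonpos (by linarith)]; ring
  -- β q = s
  have hβq : β q = s := by
    have h1 : Tendsto (fun t => dist o (γp t) - dist q (γp t)) atTop (nhds s) := by
      have : (fun t => dist o (γp t) - dist q (γp t)) =ᶠ[atTop] fun _ => s := by
        filter_upwards [eventually_ge_atTop (max s 0)] with t ht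
        have hts : s ≤ t := le_trans (le_max_left _ _) ht
        have ht0 : (0:ℝ) ≤ t := le_trans (le_max_right _ _) ht
        rw [hdop t ht0, hq, hγp s hs t ht0, abs_of_nonpos (by linarith)]
        ring
      exact Tendsto.congr' this.symm tendsto_const_nhds
    exact tendsto_nhds_unique (hβ q) h1
  -- β w ≤ u
  have hβw_le : β w ≤ u := by
    have : ∀ᶠ t in atTop, dist o (γp t) - dist w (γp t) ≤ u := by
      filter_upwards [eventually_ge_atTop (0:ℝ)] with t ht
      have := dist_triangle o w (γp t)
      linarith [hdow ▸ this]
    exact le_of_tendsto (hβ w) this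
  have hsu : s ≤ u := le_trans (hβq ▸ hbqw) hβw_le
  set v : ℝ := (s + u) / 2 with hv
  have hv0 : 0 ≤ v := by positivity
  have hvu : v ≤ u := by rw [hv]; linarith
  refine ⟨v, hv0, ?_⟩
  -- distances involving z = γξ v
  have hdoz : dist o (γξ v) = v := by
    rw [← hγξ0, hγξ 0 le_rfl v hv0, abs_of_nonpos (by linarith)]; ring
  have hdzw : dist (γξ v) w = u - v := by
    rw [hw, hγξ v hv0 u hu, abs_of_nonpos (by linarith)]; ring
  -- the comparison function
  have hFlim : Tendsto (fun t => min (2 * v) (u + (dist o (γp t) - dist w (γp t))) - v - 2 * δ)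
      atTop (nhds (min (2 * v) (u + β w) - v - 2 * δ)) :=
    ((tendsto_const_nhds.min (tendsto_const_nhds.add (hβ w))).sub tendsto_const_nhds).sub
      tendsto_const_nhds
  have hmin : min (2 * v) (u + β w) = 2 * v := by
    apply min_eq_left
    have : s ≤ β w := hβq ▸ hbqw
    rw [hv]; linarith
  rw [hmin] at hFlim
  have hle : β (γξ v) ≥ v - 2 * δ := by
    have hev : (fun t => min (2 * v) (u + (dist o (γp t) - dist w (γp t))) - v - 2 * δ)
        ≤ᶠ[atTop] fun t => dist o (γp t) - dist (γξ v) (γp t) := by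
      filter_upwards [eventually_ge_atTop (0:ℝ)] with t ht
      have H := hhyp (γξ v) (γp t) w o
      rw [dist_comm (γξ v) o, hdoz, dist_comm (γp t) o, hdop t ht, hdzw,
        dist_comm w o, hdow] at H
      simp only [hdop t ht]
      rcases le_total v ((u + t - dist w (γp t)) / 2) with h | h
      · have hm : min ((v + u - (u - v)) / 2) ((u + t - dist w (γp t)) / 2)
            = (v + u - (u - v)) / 2 := min_eq_left (by linarith)
        rw [hm] at H
        have : min (2 * v) (u + (t - dist w (γp t))) ≤ 2 * v := min_le_left _ _
        linarith
      · have hm : min ((v + u - (u - v)) / 2) ((u + t - dist w (γp t)) / 2)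
            = (u + t - dist w (γp t)) / 2 := min_eq_right (by linarith)
        rw [hm] at H
        have : min (2 * v) (u + (t - dist w (γp t)))
            ≤ u + (t - dist w (γp t)) := min_le_right _ _
        linarith
    have := le_of_tendsto_of_tendsto hFlim (hβ (γξ v)) hev
    linarith
  rw [hdoq, hdow]
  calc (s + u) / 2 - 2 * δ = v - 2 * δ := by rw [hv]
    _ ≤ β (γξ v) := hle
end
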